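/- arXiv:2412.01438 — 7 statements merged into one kernel-verified Lean document; each statement's English description precedes it below -/
import Mathlib

section
/- Let s_0, ..., s_{M̄-1} be vectors in ℂ^{L̄}, each with squared norm E, and let δ_max = max over v ≠ t of |⟨s_v, s_t⟩|. Then M̄(M̄-1)·δ_max² + M̄·E² ≥ ∑_{l=0}^{L̄-1} ∑_{l'=0}^{L̄-1} |∑_{v=0}^{M̄-1} s_{l,v} * conj(s_{l',v})|². -/
open Finset


/-- Lemma 1 (Welch): if every column has energy `E` and `δmax` bounds the modulus of
every inner product between distinct columns, then
`M(M-1)·δmax² + M·E²` dominates the row-wise double sum. -/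
theorem welch_inner_product_bound
    (M L : ℕ) (hM : 2 ≤ M) (E δmax : ℝ) (s : Fin M → Fin L → ℂ)
    (hE : ∀ v, ∑ l, ‖s v l‖ ^ 2 = E)
    (hδ : ∀ v t, v ≠ t → ‖∑ l, s v l * (starRingEnd ℂ) (s t l)‖ ≤ δmax) :
    ∑ l, ∑ l', ‖∑ v, s v l * (starRingEnd ℂ) (s v l')‖ ^ 2 ≤
      (M : ℝ) * (M - 1) * δmax ^ 2 + (M : ℝ) * E ^ 2 := by
  set G : Fin M → Fin M → ℂ := fun v t => ∑ l, s v l * (starRingEnd ℂ) (s t l) with hG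
  set A : Fin L → Fin L → ℂ := fun l l' => ∑ v, s v l * (starRingEnd ℂ) (s v l') with hA
  have hnorm : ∀ z : ℂ, (‖z‖:ℝ) ^ 2 = (z * (starRingEnd ℂ) z).re := by
    intro z
    rw [Complex.mul_conj, Complex.ofReal_re, Complex.sq_norm]
  have expand1 : ∀ l l' : Fin L, A l l' * (starRingEnd ℂ) (A l l')
      = ∑ v, ∑ t, s v l * (starRingEnd ℂ) (s v l') * ((starRingEnd ℂ) (s t l) * s t l') := by
    intro l l'
    rw [hA]; simp only [map_sum, map_mul, Complex.conj_conj, Finset.sum_mul_sum]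
  have expand2 : ∀ v t : Fin M, G v t * (starRingEnd ℂ) (G v t)
      = ∑ l, ∑ l', s v l * (starRingEnd ℂ) (s t l) * ((starRingEnd ℂ) (s v l') * s t l') := by
    intro v t
    rw [hG]; simp only [map_sum, map_mul, Complex.conj_conj, Finset.sum_mul_sum]
  have keyC : ∑ l, ∑ l', A l l' * (starRingEnd ℂ) (A l l')
      = ∑ v, ∑ t, G v t * (starRingEnd ℂ) (G v t) := by
    calc ∑ l, ∑ l', A l l' * (starRingEnd ℂ) (A l l')
        = ∑ q : Fin L × Fin L, ∑ p : Fin M × Fin M,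
            s p.1 q.1 * (starRingEnd ℂ) (s p.1 q.2) * ((starRingEnd ℂ) (s p.2 q.1) * s p.2 q.2) := by
          rw [← Fintype.sum_prod_type']
          exact Finset.sum_congr rfl fun q _ => by
            rw [expand1 q.1 q.2, ← Fintype.sum_prod_type']
      _ = ∑ p : Fin M × Fin M, ∑ q : Fin L × Fin L,
            s p.1 q.1 * (starRingEnd ℂ) (s p.1 q.2) * ((starRingEnd ℂ) (s p.2 q.1) * s p.2 q.2) :=
          Finset.sum_comm
      _ = ∑ v, ∑ t, G v t * (starRingEnd ℂ) (G v t) :=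
          (by
            rw [← Fintype.sum_prod_type']
            exact Finset.sum_congr rfl fun p _ => by
              rw [expand2 p.1 p.2, ← Fintype.sum_prod_type']
              exact Finset.sum_congr rfl fun q _ => by ring :
            ∑ v, ∑ t, G v t * (starRingEnd ℂ) (G v t)
              = ∑ p : Fin M × Fin M, ∑ q : Fin L × Fin L,
                  s p.1 q.1 * (starRingEnd ℂ) (s p.1 q.2) *
                    ((starRingEnd ℂ) (s p.2 q.1) * s p.2 q.2)).symm
  have key : ∑ l, ∑ l', ‖A l l'‖ ^ 2 = ∑ v, ∑ t, ‖G v t‖ ^ 2 := by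
    calc ∑ l, ∑ l', ‖A l l'‖ ^ 2 = (∑ l, ∑ l', A l l' * (starRingEnd ℂ) (A l l')).re := by
          rw [Complex.re_sum]
          exact Finset.sum_congr rfl fun l _ => by
            rw [Complex.re_sum]; exact Finset.sum_congr rfl fun l' _ => hnorm _
      _ = (∑ v, ∑ t, G v t * (starRingEnd ℂ) (G v t)).re := by rw [keyC]
      _ = ∑ v, ∑ t, ‖G v t‖ ^ 2 := by
          rw [Complex.re_sum]
          exact Finset.sum_congr rfl fun v _ => by
            rw [Complex.re_sum]; exact (Finset.sum_congr rfl fun t _ => (hnorm _).symm)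
  rw [key]
  -- diagonal entries
  have hEnn : 0 ≤ E := by
    rw [← hE ⟨0, by omega⟩]
    exact Finset.sum_nonneg fun l _ => sq_nonneg _
  have hdiag : ∀ v, ‖G v v‖ ^ 2 = E ^ 2 := by
    intro v
    have : G v v = (E : ℂ) := by
      rw [hG]
      push_cast [← hE v]
      exact Finset.sum_congr rfl fun l _ => by
        rw [Complex.mul_conj]
        norm_cast
        exact (Complex.sq_norm _).symm
    rw [this, Complex.norm_real, Real.norm_eq_abs, abs_of_nonneg hEnn]
  have hbound : ∀ v t, ‖G v t‖ ^ 2 ≤ if v = t then E ^ 2 else δmax ^ 2 := by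
    intro v t
    by_cases h : v = t
    · subst h; simp only [if_pos rfl]; exact (hdiag v).le
    · simp only [h, if_false]
      have := hδ v t h
      exact pow_le_pow_left₀ (norm_nonneg _) this 2
  calc ∑ v, ∑ t, ‖G v t‖ ^ 2 ≤ ∑ v, ∑ t, (if v = t then E ^ 2 else δmax ^ 2) :=
        Finset.sum_le_sum fun v _ => Finset.sum_le_sum fun t _ => hbound v t
    _ = (M : ℝ) * (M - 1) * δmax ^ 2 + (M : ℝ) * E ^ 2 := by
        have inner : ∀ v : Fin M, ∑ t : Fin M, (if v = t then E ^ 2 else δmax ^ 2)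
            = E ^ 2 + ((M : ℝ) - 1) * δmax ^ 2 := by
          intro v
          have h1 : ∑ t : Fin M, (if v = t then E ^ 2 else δmax ^ 2)
              = ∑ t : Fin M, (δmax ^ 2 + if v = t then E ^ 2 - δmax ^ 2 else 0) :=
            Finset.sum_congr rfl fun t _ => by split <;> ring
          rw [h1, Finset.sum_add_distrib, Finset.sum_const, Finset.sum_ite_eq,
            if_pos (Finset.mem_univ v)]
          simp [Finset.card_univ]
          ring
        rw [Finset.sum_congr rfl fun v _ => inner v, Finset.sum_const, Finset.card_univ]
        simp
        ring
end

section
/- Let s_0, ..., s_{M̄-1} ∈ ℂ^{L̄} be vectors each of squared norm E, pairwise orthogonal (⟨s_v, s_t⟩ = 0 for v ≠ t), and suppose there exists an index α such that |s_{α,v}| = 1 for all v. Then M̄·E² − M̄·(E−1)² − M̄(M̄−1) − M̄² ≥ 0, i.e., 2E·M̄ − 2M̄² ≥ 0, and hence M̄ ≤ E. -/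
/-- Key counting step of the ZCS set size bound: pairwise orthogonal equal-energy
vectors possessing a common unimodular coordinate satisfy `M ≤ E`. -/
theorem orthogonal_unimodular_coordinate_bound
    (M L : ℕ) (hM : 0 < M) (E : ℝ) (s : Fin M → Fin L → ℂ)
    (hE : ∀ v, ∑ l, ‖s v l‖ ^ 2 = E)
    (horth : ∀ v t, v ≠ t → ∑ l, s v l * (starRingEnd ℂ) (s t l) = 0)
    (α : Fin L) (hα : ∀ v, ‖s v α‖ = 1) :
    (M : ℝ) * E ^ 2 - (M : ℝ) * (E - 1) ^ 2 - (M : ℝ) * ((M : ℝ) - 1) - (M : ℝ) ^ 2 ≥ 0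
      ∧ (M : ℝ) ≤ E := by
  classical
  set z : Fin M → ℂ := fun v => (starRingEnd ℂ) (s v α) with hz
  set u : Fin L → ℂ := fun l => ∑ v, z v * s v l with hu
  have hmc : ∀ (w : ℂ), w * (starRingEnd ℂ) w = ((‖w‖ ^ 2 : ℝ) : ℂ) := by
    intro w
    rw [Complex.mul_conj]
    congr 1
    rw [Complex.normSq_eq_norm_sq]
  have hzz : ∀ v, z v * s v α = 1 := by
    intro v
    have : z v * s v α = s v α * (starRingEnd ℂ) (s v α) := by rw [hz]; ring
    rw [this, hmc, hα v]
    norm_num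
  have hdiag : ∀ v, ∑ l, s v l * (starRingEnd ℂ) (s v l) = (E : ℂ) := by
    intro v
    calc ∑ l, s v l * (starRingEnd ℂ) (s v l)
        = ∑ l, ((‖s v l‖ ^ 2 : ℝ) : ℂ) := Finset.sum_congr rfl fun l _ => hmc _
      _ = ((∑ l, ‖s v l‖ ^ 2 : ℝ) : ℂ) := by push_cast; ring
      _ = (E : ℂ) := by rw [hE v]
  have hsum : ∑ l, u l * (starRingEnd ℂ) (u l) = (M : ℂ) * (E : ℂ) := by
    have expand : ∑ l, u l * (starRingEnd ℂ) (u l)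
        = ∑ v, ∑ t, (z v * (starRingEnd ℂ) (z t)) * ∑ l, s v l * (starRingEnd ℂ) (s t l) := by
      calc ∑ l, u l * (starRingEnd ℂ) (u l)
          = ∑ l, ∑ v, ∑ t, (z v * (starRingEnd ℂ) (z t)) * (s v l * (starRingEnd ℂ) (s t l)) := by
            refine Finset.sum_congr rfl fun l _ => ?_
            rw [hu]
            simp only [map_sum, map_mul, Finset.sum_mul_sum]
            exact Finset.sum_congr rfl fun v _ => Finset.sum_congr rfl fun t _ => by ring
        _ = ∑ v, ∑ l, ∑ t, (z v * (starRingEnd ℂ) (z t)) * (s v l * (starRingEnd ℂ) (s t l)) :=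
            Finset.sum_comm
        _ = ∑ v, ∑ t, ∑ l, (z v * (starRingEnd ℂ) (z t)) * (s v l * (starRingEnd ℂ) (s t l)) :=
            Finset.sum_congr rfl fun v _ => Finset.sum_comm
        _ = ∑ v, ∑ t, (z v * (starRingEnd ℂ) (z t)) * ∑ l, s v l * (starRingEnd ℂ) (s t l) :=
            Finset.sum_congr rfl fun v _ => Finset.sum_congr rfl fun t _ =>
              (Finset.mul_sum _ _ _).symm
    rw [expand]
    have hterm : ∀ v t : Fin M,
        (z v * (starRingEnd ℂ) (z t)) * ∑ l, s v l * (starRingEnd ℂ) (s t l)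
        = if v = t then (E : ℂ) else 0 := by
      intro v t
      by_cases h : v = t
      · subst h
        rw [hdiag v, if_pos rfl]
        have h2 : z v * (starRingEnd ℂ) (z v) = 1 := by
          have : (starRingEnd ℂ) (z v) = s v α := by rw [hz]; simp
          rw [this]; exact hzz v
        rw [h2, one_mul]
      · rw [horth v t h, mul_zero, if_neg h]
    calc ∑ v, ∑ t, (z v * (starRingEnd ℂ) (z t)) * ∑ l, s v l * (starRingEnd ℂ) (s t l)
        = ∑ v : Fin M, ∑ t : Fin M, if v = t then (E : ℂ) else 0 :=
          Finset.sum_congr rfl fun v _ => Finset.sum_congr rfl fun t _ => hterm v t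
      _ = ∑ v : Fin M, (E : ℂ) := Finset.sum_congr rfl fun v _ => by simp
      _ = (M : ℂ) * (E : ℂ) := by simp [mul_comm]
  have hnorm : ∑ l, ‖u l‖ ^ 2 = (M : ℝ) * E := by
    have : ((∑ l, ‖u l‖ ^ 2 : ℝ) : ℂ) = (((M : ℝ) * E : ℝ) : ℂ) := by
      calc ((∑ l, ‖u l‖ ^ 2 : ℝ) : ℂ)
          = ∑ l, ((‖u l‖ ^ 2 : ℝ) : ℂ) := by push_cast; ring
        _ = ∑ l, u l * (starRingEnd ℂ) (u l) := Finset.sum_congr rfl fun l _ => (hmc _).symm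
        _ = (M : ℂ) * (E : ℂ) := hsum
        _ = (((M : ℝ) * E : ℝ) : ℂ) := by push_cast; ring
    exact_mod_cast this
  have huα : u α = (M : ℂ) := by
    rw [hu]
    simp only
    rw [Finset.sum_congr rfl fun v _ => hzz v]
    simp
  have hsingle : ‖u α‖ ^ 2 ≤ ∑ l, ‖u l‖ ^ 2 :=
    Finset.single_le_sum (f := fun l => ‖u l‖ ^ 2) (fun l _ => sq_nonneg _) (Finset.mem_univ α)
  have hMsq : (M : ℝ) ^ 2 ≤ (M : ℝ) * E := by
    rw [huα, hnorm] at hsingle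
    simpa using hsingle
  have hMpos : (0 : ℝ) < M := by exact_mod_cast hM
  have hME : (M : ℝ) ≤ E := by nlinarith
  exact ⟨by nlinarith, hME⟩
end

section
/- Let C = {C^0, ..., C^{M-1}} be an aperiodic (M,N,L,Z)-Z-complementary set of unimodular complex sequences. Then M ≤ ⌊NL/Z⌋. -/
/-- Aperiodic cross-correlation of two length-`L` sequences at nonnegative shift `u`. -/
noncomputable def zcorr (L : ℕ) (c d : ℕ → ℂ) (u : ℕ) : ℂ :=
  ∑ i ∈ Finset.range (L - u), c (i + u) * (starRingEnd ℂ) (d i)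

/-- Shifted, zero-padded version of a length-`L` sequence. -/
noncomputable def zfv (L : ℕ) (g : ℕ → ℂ) (s i : ℕ) : ℂ :=
  if s ≤ i ∧ i < s + L then g (i - s) else 0

lemma zfv_inner (L Z : ℕ) (hZ : 0 < Z) (hZL : Z ≤ L) (g h : ℕ → ℂ)
    (s s' : ℕ) (h1 : s' ≤ s) (h2 : s < Z) :
    ∑ i ∈ Finset.range (L + Z - 1), zfv L g s i * (starRingEnd ℂ) (zfv L h s' i)
      = (starRingEnd ℂ) (zcorr L h g (s - s')) := by
  have hpt : ∀ i, zfv L g s i * (starRingEnd ℂ) (zfv L h s' i)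
      = if i ∈ Finset.Ico s (s' + L) then g (i - s) * (starRingEnd ℂ) (h (i - s')) else 0 := by
    intro i
    unfold zfv
    simp only [Finset.mem_Ico]
    by_cases hA : s ≤ i ∧ i < s' + L
    · rw [if_pos hA, if_pos ⟨hA.1, by omega⟩, if_pos ⟨by omega, hA.2⟩]
    · rw [if_neg hA]
      by_cases h3 : s ≤ i ∧ i < s + L
      · rw [if_neg (show ¬(s' ≤ i ∧ i < s' + L) by omega), map_zero, mul_zero]
      · rw [if_neg h3, zero_mul]
  simp_rw [hpt]
  rw [Finset.sum_ite_mem]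
  have hsub : Finset.range (L + Z - 1) ∩ Finset.Ico s (s' + L) = Finset.Ico s (s' + L) := by
    rw [Finset.inter_eq_right]
    intro x hx
    simp only [Finset.mem_Ico] at hx
    simp only [Finset.mem_range]
    omega
  rw [hsub, Finset.sum_Ico_eq_sum_range]
  unfold zcorr
  rw [map_sum]
  have hlen : s' + L - s = L - (s - s') := by omega
  rw [hlen]
  apply Finset.sum_congr rfl
  intro j hj
  have e1 : s + j - s = j := by omega
  have e2 : s + j - s' = j + (s - s') := by omega
  rw [e1, e2, map_mul, Complex.conj_conj]
  ring

lemma zgram_le {M : ℕ} (N L Z : ℕ) (hZ : 0 < Z) (hZL : Z ≤ L)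
    (c : Fin M → ℕ → ℕ → ℂ)
    (hauto0 : ∀ p, ∑ lam ∈ Finset.range N, zcorr L (c p lam) (c p lam) 0 = (N * L : ℕ))
    (hauto : ∀ p u, 0 < u → u < Z →
      ∑ lam ∈ Finset.range N, zcorr L (c p lam) (c p lam) u = 0)
    (hcross : ∀ p t, p ≠ t → ∀ u, u < Z →
      ∑ lam ∈ Finset.range N, zcorr L (c p lam) (c t lam) u = 0)
    (p t : Fin M) (s s' : ℕ) (hs : s < Z) (h1 : s' ≤ s) :
    ∑ lam ∈ Finset.range N, ∑ i ∈ Finset.range (L + Z - 1),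
        zfv L (c p lam) s i * (starRingEnd ℂ) (zfv L (c t lam) s' i)
      = if p = t ∧ s = s' then ((N * L : ℕ) : ℂ) else 0 := by
  have step : ∑ lam ∈ Finset.range N, ∑ i ∈ Finset.range (L + Z - 1),
        zfv L (c p lam) s i * (starRingEnd ℂ) (zfv L (c t lam) s' i)
      = (starRingEnd ℂ) (∑ lam ∈ Finset.range N, zcorr L (c t lam) (c p lam) (s - s')) := by
    rw [map_sum]
    exact Finset.sum_congr rfl fun lam _ =>
      zfv_inner L Z hZ hZL (c p lam) (c t lam) s s' h1 hs
  rw [step]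
  by_cases hpt : p = t
  · subst hpt
    by_cases hss : s = s'
    · have : s - s' = 0 := by omega
      rw [this, hauto0 p]
      simp [hss, Complex.conj_natCast]
    · have hu : 0 < s - s' := by omega
      rw [hauto p (s - s') hu (by omega)]
      simp [hss]
  · rw [hcross t p (fun h => hpt h.symm) (s - s') (by omega)]
    simp [hpt]

lemma zgram {M : ℕ} (N L Z : ℕ) (hZ : 0 < Z) (hZL : Z ≤ L)
    (c : Fin M → ℕ → ℕ → ℂ)
    (hauto0 : ∀ p, ∑ lam ∈ Finset.range N, zcorr L (c p lam) (c p lam) 0 = (N * L : ℕ))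
    (hauto : ∀ p u, 0 < u → u < Z →
      ∑ lam ∈ Finset.range N, zcorr L (c p lam) (c p lam) u = 0)
    (hcross : ∀ p t, p ≠ t → ∀ u, u < Z →
      ∑ lam ∈ Finset.range N, zcorr L (c p lam) (c t lam) u = 0)
    (p t : Fin M) (s s' : ℕ) (hs : s < Z) (hs' : s' < Z) :
    ∑ lam ∈ Finset.range N, ∑ i ∈ Finset.range (L + Z - 1),
        zfv L (c p lam) s i * (starRingEnd ℂ) (zfv L (c t lam) s' i)
      = if p = t ∧ s = s' then ((N * L : ℕ) : ℂ) else 0 := by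
  rcases le_total s' s with h1 | h1
  · exact zgram_le N L Z hZ hZL c hauto0 hauto hcross p t s s' hs h1
  · have key := zgram_le N L Z hZ hZL c hauto0 hauto hcross t p s' s hs' h1
    have conjeq : ∑ lam ∈ Finset.range N, ∑ i ∈ Finset.range (L + Z - 1),
        zfv L (c p lam) s i * (starRingEnd ℂ) (zfv L (c t lam) s' i)
      = (starRingEnd ℂ) (∑ lam ∈ Finset.range N, ∑ i ∈ Finset.range (L + Z - 1),
          zfv L (c t lam) s' i * (starRingEnd ℂ) (zfv L (c p lam) s i)) := by
      rw [map_sum]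
      refine Finset.sum_congr rfl fun lam _ => ?_
      rw [map_sum]
      refine Finset.sum_congr rfl fun i _ => ?_
      rw [map_mul, Complex.conj_conj]
      ring
    rw [conjeq, key]
    by_cases h2 : p = t ∧ s = s'
    · rw [if_pos ⟨h2.1.symm, h2.2.symm⟩, if_pos h2, Complex.conj_natCast]
    · rw [if_neg (fun h => h2 ⟨h.1.symm, h.2.symm⟩), if_neg h2, map_zero]

lemma sum_swap4 {α β γ δ : Type*} (A : Finset α) (B : Finset β) (C : Finset γ) (D : Finset δ)
    (F : α → β → γ → δ → ℂ) :
    ∑ a ∈ A, ∑ b ∈ B, ∑ x ∈ C, ∑ d ∈ D, F a b x d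
      = ∑ x ∈ C, ∑ d ∈ D, ∑ a ∈ A, ∑ b ∈ B, F a b x d := by
  calc ∑ a ∈ A, ∑ b ∈ B, ∑ x ∈ C, ∑ d ∈ D, F a b x d
      = ∑ a ∈ A, ∑ x ∈ C, ∑ d ∈ D, ∑ b ∈ B, F a b x d := by
        refine Finset.sum_congr rfl fun a _ => ?_
        rw [Finset.sum_comm]
        exact Finset.sum_congr rfl fun x _ => Finset.sum_comm
    _ = ∑ x ∈ C, ∑ a ∈ A, ∑ d ∈ D, ∑ b ∈ B, F a b x d := Finset.sum_comm
    _ = ∑ x ∈ C, ∑ d ∈ D, ∑ a ∈ A, ∑ b ∈ B, F a b x d :=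
        Finset.sum_congr rfl fun x _ => Finset.sum_comm

theorem zcs_set_size_bound'
    (M N L Z : ℕ) (hM : 0 < M) (hN : 0 < N) (hZ : 0 < Z) (hZL : Z ≤ L)
    (c : Fin M → ℕ → ℕ → ℂ)
    (huni : ∀ p lam, lam < N → ∀ i, i < L → ‖c p lam i‖ = 1)
    (hauto0 : ∀ p, ∑ lam ∈ Finset.range N, zcorr L (c p lam) (c p lam) 0 = (N * L : ℕ))
    (hauto : ∀ p u, 0 < u → u < Z →
      ∑ lam ∈ Finset.range N, zcorr L (c p lam) (c p lam) u = 0)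
    (hcross : ∀ p t, p ≠ t → ∀ u, u < Z →
      ∑ lam ∈ Finset.range N, zcorr L (c p lam) (c t lam) u = 0) :
    M ≤ N * L / Z := by
  have hL : 0 < L := lt_of_lt_of_le hZ hZL
  set L' := L + Z - 1 with hL'
  set Q : Finset (Fin M × ℕ) := Finset.univ ×ˢ Finset.range Z with hQ
  have hQcard : Q.card = M * Z := by
    rw [hQ, Finset.card_product, Finset.card_univ, Fintype.card_fin, Finset.card_range]
  set a : Fin M → ℕ → ℂ := fun p s => zfv L (c p 0) s (Z - 1) with ha
  have haval : ∀ p s, s < Z → a p s = c p 0 (Z - 1 - s) := by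
    intro p s hs
    show zfv L (c p 0) s (Z - 1) = _
    unfold zfv
    rw [if_pos ⟨(by omega : s ≤ Z - 1), (by omega : Z - 1 < s + L)⟩]
  have hanorm : ∀ p s, s < Z → (starRingEnd ℂ) (a p s) * a p s = 1 := by
    intro p s hs
    have hn : ‖a p s‖ = 1 := by
      rw [haval p s hs]
      exact huni p 0 hN _ (by omega)
    rw [mul_comm, Complex.mul_conj]
    rw [Complex.normSq_eq_norm_sq]
    rw [show ‖a p s‖ = 1 from hn, one_pow, Complex.ofReal_one]
  set w : ℕ → ℕ → ℂ := fun lam i =>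
    ∑ q ∈ Q, (starRingEnd ℂ) (a q.1 q.2) * zfv L (c q.1 lam) q.2 i with hw
  -- value at the distinguished coordinate
  have hwval : w 0 (Z - 1) = ((M * Z : ℕ) : ℂ) := by
    rw [hw]
    simp only
    have : ∀ q ∈ Q, (starRingEnd ℂ) (a q.1 q.2) * zfv L (c q.1 0) q.2 (Z - 1) = 1 := by
      intro q hq
      have hq2 : q.2 < Z := by
        rw [hQ] at hq
        simpa using (Finset.mem_product.mp hq).2
      exact hanorm q.1 q.2 hq2
    rw [Finset.sum_congr rfl this, Finset.sum_const, hQcard, nsmul_eq_mul, mul_one]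
  -- total energy
  have hSval : ∑ lam ∈ Finset.range N, ∑ i ∈ Finset.range L',
      w lam i * (starRingEnd ℂ) (w lam i) = ((M * Z : ℕ) : ℂ) * ((N * L : ℕ) : ℂ) := by
    have hpt : ∀ lam i, w lam i * (starRingEnd ℂ) (w lam i)
        = ∑ q ∈ Q, ∑ r ∈ Q, ((starRingEnd ℂ) (a q.1 q.2) * a r.1 r.2)
            * (zfv L (c q.1 lam) q.2 i * (starRingEnd ℂ) (zfv L (c r.1 lam) r.2 i)) := by
      intro lam i
      rw [hw]
      simp only
      rw [map_sum, Finset.sum_mul_sum]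
      refine Finset.sum_congr rfl fun q _ => Finset.sum_congr rfl fun r _ => ?_
      rw [map_mul, Complex.conj_conj]
      ring
    simp_rw [hpt]
    rw [sum_swap4]
    have hinner : ∀ q ∈ Q, ∀ r ∈ Q,
        ∑ lam ∈ Finset.range N, ∑ i ∈ Finset.range L',
          ((starRingEnd ℂ) (a q.1 q.2) * a r.1 r.2)
            * (zfv L (c q.1 lam) q.2 i * (starRingEnd ℂ) (zfv L (c r.1 lam) r.2 i))
        = ((starRingEnd ℂ) (a q.1 q.2) * a r.1 r.2)
            * (if q.1 = r.1 ∧ q.2 = r.2 then ((N * L : ℕ) : ℂ) else 0) := by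
      intro q hq r hr
      have hq2 : q.2 < Z := by
        rw [hQ] at hq; simpa using (Finset.mem_product.mp hq).2
      have hr2 : r.2 < Z := by
        rw [hQ] at hr; simpa using (Finset.mem_product.mp hr).2
      simp_rw [← Finset.mul_sum]
      rw [zgram N L Z hZ hZL c hauto0 hauto hcross q.1 r.1 q.2 r.2 hq2 hr2]
    rw [Finset.sum_congr rfl fun q hq => Finset.sum_congr rfl fun r hr => hinner q hq r hr]
    have hrow : ∀ q ∈ Q, ∑ r ∈ Q, ((starRingEnd ℂ) (a q.1 q.2) * a r.1 r.2)
        * (if q.1 = r.1 ∧ q.2 = r.2 then ((N * L : ℕ) : ℂ) else 0) = ((N * L : ℕ) : ℂ) := by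
      intro q hq
      have hq2 : q.2 < Z := by
        rw [hQ] at hq; simpa using (Finset.mem_product.mp hq).2
      rw [Finset.sum_eq_single_of_mem q hq]
      · rw [if_pos ⟨rfl, rfl⟩, hanorm q.1 q.2 hq2, one_mul]
      · intro r hr hne
        rw [if_neg (fun h => hne (Prod.ext h.1.symm h.2.symm)), mul_zero]
    rw [Finset.sum_congr rfl hrow, Finset.sum_const, hQcard, nsmul_eq_mul]
    try push_cast
    try ring
  -- pass to real parts
  have hreal : ∑ lam ∈ Finset.range N, ∑ i ∈ Finset.range L',
      Complex.normSq (w lam i) = ((M * Z : ℕ) : ℝ) * ((N * L : ℕ) : ℝ) := by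
    have := hSval
    simp_rw [Complex.mul_conj] at this
    push_cast at this ⊢
    exact_mod_cast this
  have hterm : Complex.normSq (w 0 (Z - 1))
      ≤ ∑ lam ∈ Finset.range N, ∑ i ∈ Finset.range L', Complex.normSq (w lam i) := by
    have h1 : Complex.normSq (w 0 (Z - 1))
        ≤ ∑ i ∈ Finset.range L', Complex.normSq (w 0 i) := by
      refine Finset.single_le_sum (fun i _ => Complex.normSq_nonneg _) ?_
      simp only [Finset.mem_range]
      omega
    refine le_trans h1 ?_
    refine Finset.single_le_sum
      (fun lam _ => Finset.sum_nonneg fun i _ => Complex.normSq_nonneg _) ?_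
    simpa using hN
  have hsq : Complex.normSq (w 0 (Z - 1)) = ((M * Z : ℕ) : ℝ) ^ 2 := by
    rw [hwval]
    rw [Complex.normSq_natCast]
    push_cast
    ring
  have hMZpos : (0 : ℝ) < ((M * Z : ℕ) : ℝ) := by
    have : 0 < M * Z := Nat.mul_pos hM hZ
    exact_mod_cast this
  have hkey : ((M * Z : ℕ) : ℝ) ≤ ((N * L : ℕ) : ℝ) := by
    rw [hsq, hreal] at hterm
    nlinarith
  have hkeyN : M * Z ≤ N * L := by exact_mod_cast hkey
  exact (Nat.le_div_iff_mul_le hZ).mpr hkeyN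

/-- Theorem 1: the set size of an aperiodic `(M,N,L,Z)`-ZCS satisfies `M ≤ ⌊NL/Z⌋`. -/
theorem zcs_set_size_bound
    (M N L Z : ℕ) (hM : 0 < M) (hN : 0 < N) (hZ : 0 < Z) (hZL : Z ≤ L)
    (c : Fin M → ℕ → ℕ → ℂ)
    (huni : ∀ p lam, lam < N → ∀ i, i < L → ‖c p lam i‖ = 1)
    (hauto0 : ∀ p, ∑ lam ∈ Finset.range N, zcorr L (c p lam) (c p lam) 0 = (N * L : ℕ))
    (hauto : ∀ p u, 0 < u → u < Z →
      ∑ lam ∈ Finset.range N, zcorr L (c p lam) (c p lam) u = 0)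
    (hcross : ∀ p t, p ≠ t → ∀ u, u < Z →
      ∑ lam ∈ Finset.range N, zcorr L (c p lam) (c t lam) u = 0) :
    M ≤ N * L / Z := by
  exact zcs_set_size_bound' M N L Z hM hN hZ hZL c huni hauto0 hauto hcross
end

section
/- Let c^p_λ be sequences forming an (M,N,L,Z)-ZCS. Define for each p ∈ {0,...,M-1} and u ∈ {0,...,Z-1} the vector s_{pZ+u} ∈ ℂ^{N(L+Z-1)} as the u-th right cyclic shift of the concatenation (c^p_0, 0_{Z-1}, c^p_1, 0_{Z-1}, ..., c^p_{N-1}, 0_{Z-1}), where 0_{Z-1} is the all-zero vector of length Z-1. Then the vectors s_0, ..., s_{MZ-1} are pairwise orthogonal and each has squared norm NL. -/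
noncomputable def shiftedConcat (N L Z : ℕ) (c : ℕ → ℕ → ℂ) (u : ℕ) (l : ℕ) : ℂ :=
  let B := L + Z - 1
  let LL := N * B
  let j := (l + LL - u) % LL
  if j % B < L then c (j / B) (j % B) else 0

/-- unshifted zero-padded concatenation -/
noncomputable def cc (N L Z : ℕ) (c : ℕ → ℕ → ℂ) (j : ℕ) : ℂ :=
  if j % (L + Z - 1) < L then c (j / (L + Z - 1)) (j % (L + Z - 1)) else 0

lemma shiftedConcat_eq (N L Z : ℕ) (c : ℕ → ℕ → ℂ) (u l : ℕ) :
    shiftedConcat N L Z c u l = cc N L Z c ((l + N * (L + Z - 1) - u) % (N * (L + Z - 1))) := rfl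

/-- cyclic reindexing -/
lemma sum_shift (LL v : ℕ) (hv : v ≤ LL) (f : ℕ → ℂ) :
    ∑ l ∈ Finset.range LL, f ((l + v) % LL) = ∑ l ∈ Finset.range LL, f (l % LL) := by
  rcases Nat.eq_zero_or_pos LL with h | h
  · simp [h]
  refine Finset.sum_nbij' (fun l => (l + v) % LL) (fun l => (l + (LL - v)) % LL) ?_ ?_ ?_ ?_ ?_
  · intro a _; exact Finset.mem_range.2 (Nat.mod_lt _ h)
  · intro a _; exact Finset.mem_range.2 (Nat.mod_lt _ h)
  · intro a ha
    show ((a + v) % LL + (LL - v)) % LL = a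
    rw [Nat.mod_add_mod]
    have : a + v + (LL - v) = a + LL := by omega
    rw [this, Nat.add_mod_right, Nat.mod_eq_of_lt (Finset.mem_range.1 ha)]
  · intro a ha
    show ((a + (LL - v)) % LL + v) % LL = a
    rw [Nat.mod_add_mod]
    have : a + (LL - v) + v = a + LL := by omega
    rw [this, Nat.add_mod_right, Nat.mod_eq_of_lt (Finset.mem_range.1 ha)]
  · intro a _
    show f ((a + v) % LL) = f ((a + v) % LL % LL)
    rw [Nat.mod_mod_of_dvd _ dvd_rfl]

lemma sum_shift' (LL v : ℕ) (hv : v ≤ LL) (f : ℕ → ℂ) :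
    ∑ l ∈ Finset.range LL, f ((l + v) % LL) = ∑ l ∈ Finset.range LL, f l := by
  rw [sum_shift LL v hv f]
  exact Finset.sum_congr rfl fun l hl => by
    rw [Nat.mod_eq_of_lt (Finset.mem_range.1 hl)]

lemma sum_range_mul_blocks (NN B : ℕ) (f : ℕ → ℂ) :
    ∑ l ∈ Finset.range (NN * B), f l
      = ∑ a ∈ Finset.range NN, ∑ i ∈ Finset.range B, f (a * B + i) := by
  induction NN with
  | zero => simp
  | succ n ih =>
      rw [Nat.succ_mul, Finset.sum_range_add, ih, Finset.sum_range_succ]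

/-- core evaluation of the cyclic correlation of concatenations at shift `d`, `d < Z`. -/
lemma T_eval (N L Z : ℕ) (hZ : 0 < Z) (hZL : Z ≤ L)
    (cp ct : ℕ → ℕ → ℂ) (d : ℕ) (hd : d < Z) :
    ∑ l ∈ Finset.range (N * (L + Z - 1)),
        cc N L Z cp ((l + d) % (N * (L + Z - 1))) * (starRingEnd ℂ) (cc N L Z ct (l % (N * (L + Z - 1))))
      = ∑ lam ∈ Finset.range N, zcorr L (cp lam) (ct lam) d := by
  set B := L + Z - 1 with hB
  have hLB : L ≤ B := by omega
  have hBpos : 0 < B := by omega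
  rw [sum_range_mul_blocks]
  refine Finset.sum_congr rfl ?_
  intro a ha
  have haN : a < N := Finset.mem_range.1 ha
  have key : ∀ i ∈ Finset.range B,
      cc N L Z cp ((a * B + i + d) % (N * B)) * (starRingEnd ℂ) (cc N L Z ct ((a * B + i) % (N * B)))
        = if i < L - d then cp a (i + d) * (starRingEnd ℂ) (ct a i) else 0 := by
    intro i hi
    have hiB : i < B := Finset.mem_range.1 hi
    have h1 : a * B + i < N * B := by
      calc a * B + i < a * B + B := by omega
        _ = (a + 1) * B := by ring
        _ ≤ N * B := Nat.mul_le_mul_right _ (by omega)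
    rw [Nat.mod_eq_of_lt h1]
    have hmod : (a * B + i) % B = i := by
      rw [Nat.mul_comm, Nat.mul_add_mod, Nat.mod_eq_of_lt hiB]
    have hdiv : (a * B + i) / B = a := by
      rw [Nat.mul_comm, Nat.mul_add_div hBpos, Nat.div_eq_of_lt hiB, Nat.add_zero]
    by_cases hiL : i < L
    · have hid : i + d < B := by omega
      have h2 : a * B + i + d < N * B := by
        calc a * B + i + d = a * B + (i + d) := by ring
          _ < a * B + B := by omega
          _ = (a + 1) * B := by ring
          _ ≤ N * B := Nat.mul_le_mul_right _ (by omega)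
      rw [Nat.mod_eq_of_lt h2]
      have hmod2 : (a * B + i + d) % B = i + d := by
        rw [Nat.add_assoc, Nat.mul_comm, Nat.mul_add_mod, Nat.mod_eq_of_lt hid]
      have hdiv2 : (a * B + i + d) / B = a := by
        rw [Nat.add_assoc, Nat.mul_comm, Nat.mul_add_div hBpos, Nat.div_eq_of_lt hid, Nat.add_zero]
      unfold cc
      rw [← hB, hmod, hdiv, hmod2, hdiv2, if_pos hiL]
      by_cases hidL : i + d < L
      · rw [if_pos hidL, if_pos (by omega : i < L - d)]
      · rw [if_neg hidL, if_neg (by omega : ¬ i < L - d), zero_mul]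
    · unfold cc
      rw [← hB, hmod, hdiv, if_neg hiL, if_neg (by omega : ¬ i < L - d), map_zero, mul_zero]
  rw [Finset.sum_congr rfl key]
  rw [zcorr]
  have hsub : Finset.range (L - d) ⊆ Finset.range B :=
    Finset.range_subset_range.2 (by omega)
  rw [← Finset.sum_subset hsub (fun x _ hx => if_neg (by simpa using hx))]
  refine Finset.sum_congr rfl ?_
  intro i hi
  rw [if_pos (Finset.mem_range.1 hi)]

lemma zcorr_diag (L : ℕ) (f : ℕ → ℂ) (h : ∀ i, i < L → ‖f i‖ = 1) :
    zcorr L f f 0 = (L : ℂ) := by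
  unfold zcorr
  rw [Nat.sub_zero]
  have : ∀ i ∈ Finset.range L, f (i + 0) * (starRingEnd ℂ) (f i) = 1 := by
    intro i hi
    rw [Nat.add_zero, Complex.mul_conj]
    have h1 : Complex.normSq (f i) = 1 := by
      rw [Complex.normSq_eq_norm_sq, h i (Finset.mem_range.1 hi)]
      norm_num
    rw [h1]; norm_num
  rw [Finset.sum_congr rfl this, Finset.sum_const, Finset.card_range, nsmul_eq_mul, mul_one]

lemma S_eval (N L Z : ℕ) (hN : 0 < N) (hZ : 0 < Z) (hZL : Z ≤ L)
    (cp ct : ℕ → ℕ → ℂ) (u u' : ℕ) (hu : u < Z) (hu' : u' < Z) :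
    ∑ l ∈ Finset.range (N * (L + Z - 1)),
        shiftedConcat N L Z cp u l * (starRingEnd ℂ) (shiftedConcat N L Z ct u' l)
      = if u ≤ u' then ∑ lam ∈ Finset.range N, zcorr L (cp lam) (ct lam) (u' - u)
        else (starRingEnd ℂ) (∑ lam ∈ Finset.range N, zcorr L (ct lam) (cp lam) (u - u')) := by
  have hBLL : L + Z - 1 ≤ N * (L + Z - 1) := Nat.le_mul_of_pos_left _ hN
  obtain ⟨LL, hLL⟩ : ∃ x, N * (L + Z - 1) = x := ⟨_, rfl⟩
  have huLL : u ≤ LL := by omega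
  have hu'LL : u' ≤ LL := by omega
  obtain ⟨w, hw⟩ : ∃ x, (LL - u) + u' = x := ⟨_, rfl⟩
  rw [hLL]
  have stepAB : ∑ l ∈ Finset.range LL,
      shiftedConcat N L Z cp u l * (starRingEnd ℂ) (shiftedConcat N L Z ct u' l)
      = ∑ l ∈ Finset.range LL,
        cc N L Z cp ((l + w) % LL) * (starRingEnd ℂ) (cc N L Z ct (l % LL)) := by
    calc ∑ l ∈ Finset.range LL,
          shiftedConcat N L Z cp u l * (starRingEnd ℂ) (shiftedConcat N L Z ct u' l)
        = ∑ l ∈ Finset.range LL, (fun k =>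
            cc N L Z cp ((k + w) % LL) * (starRingEnd ℂ) (cc N L Z ct (k % LL)))
            ((l + (LL - u')) % LL) := by
          refine Finset.sum_congr rfl ?_
          intro l _
          rw [shiftedConcat_eq, shiftedConcat_eq, hLL]
          simp only
          rw [Nat.mod_add_mod, Nat.mod_mod_of_dvd _ dvd_rfl]
          have e2 : l + LL - u' = l + (LL - u') := by omega
          rw [e2]
          have e : l + (LL - u') + w = (l + LL - u) + LL := by omega
          rw [e, Nat.add_mod_right]
      _ = ∑ l ∈ Finset.range LL,
            cc N L Z cp ((l + w) % LL) * (starRingEnd ℂ) (cc N L Z ct (l % LL)) := by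
          rw [sum_shift LL (LL - u') (by omega) (fun k =>
            cc N L Z cp ((k + w) % LL) * (starRingEnd ℂ) (cc N L Z ct (k % LL)))]
          refine Finset.sum_congr rfl ?_
          intro l _
          rw [Nat.mod_add_mod, Nat.mod_mod_of_dvd _ dvd_rfl]
  rw [stepAB]
  by_cases hle : u ≤ u'
  · rw [if_pos hle]
    have step : ∑ l ∈ Finset.range LL,
          cc N L Z cp ((l + w) % LL) * (starRingEnd ℂ) (cc N L Z ct (l % LL))
        = ∑ l ∈ Finset.range LL,
          cc N L Z cp ((l + (u' - u)) % LL) * (starRingEnd ℂ) (cc N L Z ct (l % LL)) := by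
      refine Finset.sum_congr rfl ?_
      intro l _
      have e : l + w = (l + (u' - u)) + LL := by omega
      rw [e, Nat.add_mod_right]
    rw [step]
    have T := T_eval N L Z hZ hZL cp ct (u' - u) (by omega)
    rw [hLL] at T
    exact T
  · rw [if_neg hle]
    have hdZ : u - u' < Z := by omega
    have stepC : ∑ l ∈ Finset.range LL,
        cc N L Z cp ((l + w) % LL) * (starRingEnd ℂ) (cc N L Z ct (l % LL))
        = ∑ l ∈ Finset.range LL,
          cc N L Z cp (l % LL) * (starRingEnd ℂ) (cc N L Z ct ((l + (u - u')) % LL)) := by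
      calc ∑ l ∈ Finset.range LL,
            cc N L Z cp ((l + w) % LL) * (starRingEnd ℂ) (cc N L Z ct (l % LL))
          = ∑ l ∈ Finset.range LL, (fun k =>
              cc N L Z cp (k % LL) * (starRingEnd ℂ) (cc N L Z ct ((k + (u - u')) % LL)))
              ((l + w) % LL) := by
            refine Finset.sum_congr rfl ?_
            intro l _
            simp only
            rw [Nat.mod_mod_of_dvd _ dvd_rfl, Nat.mod_add_mod]
            have e : l + w + (u - u') = l + LL := by omega
            rw [e, Nat.add_mod_right]
        _ = _ := by
            rw [sum_shift LL w (by omega) (fun k =>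
              cc N L Z cp (k % LL) * (starRingEnd ℂ) (cc N L Z ct ((k + (u - u')) % LL)))]
            refine Finset.sum_congr rfl ?_
            intro l _
            rw [Nat.mod_mod_of_dvd _ dvd_rfl, Nat.mod_add_mod]
    rw [stepC]
    have T := T_eval N L Z hZ hZL ct cp (u - u') hdZ
    rw [hLL] at T
    rw [← T, map_sum]
    refine Finset.sum_congr rfl ?_
    intro l _
    simp only [map_mul, Complex.conj_conj]
    ring

/-- The `MZ` shifted zero-padded concatenations built from an `(M,N,L,Z)`-ZCS are
pairwise orthogonal, and each has squared norm `NL`. -/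
theorem zcs_shifted_vectors_orthogonal
    (M N L Z : ℕ) (hM : 0 < M) (hN : 0 < N) (hZ : 0 < Z) (hZL : Z ≤ L)
    (c : ℕ → ℕ → ℕ → ℂ)
    (huni : ∀ p, p < M → ∀ lam, lam < N → ∀ i, i < L → ‖c p lam i‖ = 1)
    (hauto : ∀ p, p < M → ∀ u, 0 < u → u < Z →
      ∑ lam ∈ Finset.range N, zcorr L (c p lam) (c p lam) u = 0)
    (hcross : ∀ p t, p < M → t < M → p ≠ t → ∀ u, u < Z →
      ∑ lam ∈ Finset.range N, zcorr L (c p lam) (c t lam) u = 0) :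
    (∀ p u, p < M → u < Z →
      ∑ l ∈ Finset.range (N * (L + Z - 1)),
        shiftedConcat N L Z (c p) u l *
          (starRingEnd ℂ) (shiftedConcat N L Z (c p) u l) = (N * L : ℕ)) ∧
    (∀ p u t u', p < M → u < Z → t < M → u' < Z → (p, u) ≠ (t, u') →
      ∑ l ∈ Finset.range (N * (L + Z - 1)),
        shiftedConcat N L Z (c p) u l *
          (starRingEnd ℂ) (shiftedConcat N L Z (c t) u' l) = 0) := by
  constructor
  · intro p u hp hu
    rw [S_eval N L Z hN hZ hZL (c p) (c p) u u hu hu, if_pos le_rfl, Nat.sub_self]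
    have : ∀ lam ∈ Finset.range N, zcorr L (c p lam) (c p lam) 0 = (L : ℂ) :=
      fun lam hlam => zcorr_diag L (c p lam) (huni p hp lam (Finset.mem_range.1 hlam))
    rw [Finset.sum_congr rfl this, Finset.sum_const, Finset.card_range, nsmul_eq_mul]
    push_cast
    ring
  · intro p u t u' hp hu ht hu' hne
    rw [S_eval N L Z hN hZ hZL (c p) (c t) u u' hu hu']
    by_cases hle : u ≤ u'
    · rw [if_pos hle]
      by_cases hpt : p = t
      · subst hpt
        have huu : u ≠ u' := fun h => hne (by rw [h])
        exact hauto p hp (u' - u) (by omega) (by omega)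
      · exact hcross p t hp ht hpt (u' - u) (by omega)
    · rw [if_neg hle]
      by_cases hpt : p = t
      · subst hpt
        rw [hauto p hp (u - u') (by omega) (by omega), map_zero]
      · rw [hcross t p ht hp (fun h => hpt h.symm) (u - u') (by omega), map_zero]
end

section
/- Let q be even, m ≥ 1, and f: ℤ_2^m → ℤ_q defined by f(x_1,...,x_m) = (q/2)·∑_{l=1}^{m-1} x_l x_{l+1} + ∑_{l=1}^m β_l x_l + β_0 with β_l ∈ ℤ_q. Let f_i = f(i_1,...,i_m) where (i_1,...,i_m) is the binary representation of i, and let ξ = e^{2πi/q}. Then the pair of sequences (ξ^{f_i})_{i=0}^{2^m−1} and (ξ^{f_i + (q/2)·i_1})_{i=0}^{2^m−1} is a Golay complementary pair: the sum of their aperiodic autocorrelations vanishes at every nonzero shift u with 0 < u < 2^m. -/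
/-- Aperiodic autocorrelation of a length-`L` sequence at nonnegative shift `u`. -/
noncomputable def aacf (L : ℕ) (c : ℕ → ℂ) (u : ℕ) : ℂ :=
  ∑ i ∈ Finset.range (L - u), c (i + u) * (starRingEnd ℂ) (c i)

/-- The `l`-th binary digit (0-based) of `i`. -/
def bit2 (i l : ℕ) : ℕ := i / 2 ^ l % 2



lemma dj_bit2_le (x l : ℕ) : bit2 x l ≤ 1 := by
  rw [bit2]; omega

lemma dj_decomp (x k : ℕ) :
    x = 2 ^ (k+1) * (x / 2 ^ (k+1)) + 2 ^ k * bit2 x k + x % 2 ^ k := by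
  have h1 : x / 2 ^ k = 2 * (x / 2 ^ (k+1)) + bit2 x k := by
    have : x / 2 ^ (k+1) = x / 2 ^ k / 2 := by
      rw [pow_succ, Nat.div_div_eq_div_mul]
    rw [this, bit2]
    omega
  have h2 : x = 2 ^ k * (x / 2 ^ k) + x % 2 ^ k := (Nat.div_add_mod x (2^k)).symm
  calc x = 2 ^ k * (x / 2 ^ k) + x % 2 ^ k := h2
    _ = 2 ^ (k+1) * (x / 2 ^ (k+1)) + 2 ^ k * bit2 x k + x % 2 ^ k := by
        rw [h1, pow_succ]; ring

lemma dj_bit2_spec (q' b r k l : ℕ) (hb : b ≤ 1) (hr : r < 2 ^ k) :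
    bit2 (2 ^ (k+1) * q' + 2 ^ k * b + r) l =
      if l < k then bit2 r l else if l = k then b else bit2 q' (l - (k+1)) := by
  rcases lt_trichotomy l k with h | h | h
  · simp only [h, if_pos]
    rw [bit2, bit2]
    have hsplit : 2 ^ (k+1) * q' + 2 ^ k * b + r
        = 2 ^ l * (2 * (2 ^ (k - l) * q') + 2 * (2 ^ (k - l - 1) * b)) + r := by
      have e1 : 2 ^ (k+1) = 2 ^ l * (2 * 2 ^ (k - l)) := by
        rw [← pow_succ']
        rw [← pow_add]; congr 1; omega
      have e2 : 2 ^ k = 2 ^ l * (2 * 2 ^ (k - l - 1)) := by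
        rw [← pow_succ', ← pow_add]; congr 1; omega
      rw [e1, e2]; ring
    rw [hsplit, Nat.mul_add_div (by positivity)]
    omega
  · subst h
    rw [if_neg (lt_irrefl l), if_pos rfl, bit2]
    have hsplit : 2 ^ (l+1) * q' + 2 ^ l * b + r = 2 ^ l * (2 * q' + b) + r := by
      rw [pow_succ]; ring
    rw [hsplit, Nat.mul_add_div (by positivity), Nat.div_eq_of_lt hr]
    omega
  · have h1 : ¬ l < k := by omega
    have h2 : l ≠ k := by omega
    simp only [h1, if_neg, h2, ite_false]
    rw [bit2, bit2]
    have e1 : 2 ^ l = 2 ^ (k+1) * 2 ^ (l - (k+1)) := by rw [← pow_add]; congr 1; omega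
    have hlt : 2 ^ k * b + r < 2 ^ (k+1) := by
      have : 2 ^ k * b ≤ 2 ^ k := by
        calc 2 ^ k * b ≤ 2 ^ k * 1 := Nat.mul_le_mul_left _ hb
        _ = 2 ^ k := by ring
      rw [pow_succ]; omega
    have hdiv : (2 ^ (k+1) * q' + 2 ^ k * b + r) / 2 ^ l = q' / 2 ^ (l - (k+1)) := by
      rw [e1, ← Nat.div_div_eq_div_mul]
      congr 1
      rw [add_assoc, Nat.mul_add_div (by positivity), Nat.div_eq_of_lt hlt, add_zero]
    rw [hdiv]

lemma dj_bit2_split (x k l : ℕ) :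
    bit2 x l = if l < k then bit2 (x % 2 ^ k) l else if l = k then bit2 x k
      else bit2 (x / 2 ^ (k+1)) (l - (k+1)) := by
  conv_lhs => rw [dj_decomp x k]
  rw [dj_bit2_spec _ _ _ _ _ (dj_bit2_le x k) (Nat.mod_lt _ (by positivity))]

def djflip (x k : ℕ) : ℕ :=
  2 ^ (k+1) * (x / 2 ^ (k+1)) + 2 ^ k * (1 - bit2 x k) + x % 2 ^ k

lemma dj_bit2_flip (x k l : ℕ) :
    bit2 (djflip x k) l = if l = k then 1 - bit2 x k else bit2 x l := by
  by_cases hlk : l = k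
  · subst hlk
    rw [if_pos rfl, djflip, dj_bit2_spec _ _ _ _ _ (by have := dj_bit2_le x l; omega)
      (Nat.mod_lt _ (by positivity)), if_neg (lt_irrefl l), if_pos rfl]
  · rw [if_neg hlk, djflip, dj_bit2_spec _ _ _ _ _ (by have := dj_bit2_le x k; omega)
      (Nat.mod_lt _ (by positivity))]
    conv_rhs => rw [dj_bit2_split x k l]
    by_cases h : l < k
    · simp [h]
    · simp [h, hlk]

lemma dj_eq_of_bit2_eq {x y : ℕ} (h : ∀ l, bit2 x l = bit2 y l) : x = y := by
  apply Nat.eq_of_testBit_eq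
  intro i
  rw [Nat.testBit_eq_decide_div_mod_eq, Nat.testBit_eq_decide_div_mod_eq]
  have := h i
  rw [bit2, bit2] at this
  rw [this]

lemma dj_flip_flip (x k : ℕ) : djflip (djflip x k) k = x := by
  apply dj_eq_of_bit2_eq
  intro l
  rw [dj_bit2_flip (djflip x k) k l, dj_bit2_flip x k l, dj_bit2_flip x k k]
  by_cases h : l = k
  · subst h
    simp only [if_true, eq_self_iff_true, ite_true]
    have := dj_bit2_le x l
    omega
  · simp [h]

lemma dj_flip_ne (x k : ℕ) : djflip x k ≠ x := by
  intro h
  have h2 := dj_bit2_flip x k k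
  rw [if_pos rfl, h] at h2
  have := dj_bit2_le x k
  omega

lemma dj_flip_key (x k : ℕ) : djflip x k + 2 ^ k * bit2 x k = x + 2 ^ k * (1 - bit2 x k) := by
  have hd := dj_decomp x k
  rw [djflip]
  omega

lemma dj_flip_add {x u k : ℕ} (h : bit2 x k = bit2 (x + u) k) :
    djflip x k + u = djflip (x + u) k := by
  have h1 := dj_flip_key x k
  have h2 := dj_flip_key (x + u) k
  rw [← h] at h2
  omega

lemma dj_bit2_of_lt {x m : ℕ} (h : x < 2 ^ m) {l : ℕ} (hl : m ≤ l) : bit2 x l = 0 := by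
  rw [bit2, Nat.div_eq_of_lt (lt_of_lt_of_le h (Nat.pow_le_pow_right (by norm_num) hl))]

lemma dj_lt_two_pow {x m : ℕ} (h : ∀ l, m ≤ l → bit2 x l = 0) : x < 2 ^ m := by
  apply Nat.lt_pow_two_of_testBit
  intro i hi
  rw [Nat.testBit_eq_decide_div_mod_eq]
  have := h i hi
  rw [bit2] at this
  simp [this]

lemma dj_flip_lt {x k m : ℕ} (hx : x < 2 ^ m) (hk : k < m) : djflip x k < 2 ^ m := by
  apply dj_lt_two_pow
  intro l hl
  rw [dj_bit2_flip]
  rw [if_neg (by omega)]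
  exact dj_bit2_of_lt hx hl

lemma dj_sum_single {m k : ℕ} (hk : k < m) (g : ℕ → ℤ) (h : ∀ l, l ≠ k → g l = 0) :
    ∑ l ∈ Finset.range m, g l = g k :=
  Finset.sum_eq_single_of_mem k (Finset.mem_range.mpr hk) (fun l _ hl => h l hl)

lemma dj_xi_q {q : ℕ} (hq : 0 < q) : (Complex.exp (2 * Real.pi * Complex.I / q)) ^ q = 1 := by
  rw [← Complex.exp_nat_mul]
  have hqc : (q : ℂ) ≠ 0 := Nat.cast_ne_zero.mpr hq.ne'
  have h : (q : ℂ) * (2 * Real.pi * Complex.I / q) = 2 * Real.pi * Complex.I := by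
    field_simp
  rw [h, Complex.exp_two_pi_mul_I]

lemma dj_xi_half {q : ℕ} (hq : 0 < q) (hqe : 2 ∣ q) :
    (Complex.exp (2 * Real.pi * Complex.I / q)) ^ (q / 2) = -1 := by
  rw [← Complex.exp_nat_mul]
  have hqc : (q : ℂ) ≠ 0 := Nat.cast_ne_zero.mpr hq.ne'
  have h : ((q / 2 : ℕ) : ℂ) * (2 * Real.pi * Complex.I / q) = Real.pi * Complex.I := by
    obtain ⟨t, rfl⟩ := hqe
    have ht : (t : ℂ) ≠ 0 := by
      intro h0; apply hqc; push_cast; rw [h0]; ring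
    rw [Nat.mul_div_cancel_left t (by norm_num)]
    push_cast at hqc ⊢
    field_simp
  rw [h, Complex.exp_pi_mul_I]

lemma dj_conj_xi (q : ℕ) :
    (starRingEnd ℂ) (Complex.exp (2 * Real.pi * Complex.I / q))
      = (Complex.exp (2 * Real.pi * Complex.I / q))⁻¹ := by
  rw [← Complex.exp_conj, ← Complex.exp_neg]
  congr 1
  simp [map_div₀, Complex.conj_I, map_ofNat]
  ring

lemma dj_f_flip_diff (q m : ℕ) (β f : ℕ → ℕ)
    (hf : ∀ i, f i = q / 2 * ∑ l ∈ Finset.range (m - 1), bit2 i l * bit2 i (l + 1) +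
        ∑ l ∈ Finset.range m, β (l + 1) * bit2 i l + β 0)
    (x k : ℕ) (hk : k + 1 < m) :
    (f (djflip x k) : ℤ) - (f x : ℤ) =
      ((q / 2 : ℕ) : ℤ) * ((1 - 2 * (bit2 x k : ℤ)) * (bit2 x (k+1) : ℤ)
        + (if k = 0 then 0 else (bit2 x (k-1) : ℤ) * (1 - 2 * (bit2 x k : ℤ))))
      + (β (k+1) : ℤ) * (1 - 2 * (bit2 x k : ℤ)) := by
  set y := djflip x k with hy
  have hby : ∀ l, (bit2 y l : ℤ) = if l = k then 1 - (bit2 x l : ℤ) else (bit2 x l : ℤ) := by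
    intro l
    rw [hy, dj_bit2_flip]
    by_cases h : l = k
    · subst h
      rw [if_pos rfl, if_pos rfl, Nat.cast_sub (dj_bit2_le x l), Nat.cast_one]
    · rw [if_neg h, if_neg h]
  have hQ : (∑ l ∈ Finset.range (m-1), (bit2 y l : ℤ) * (bit2 y (l+1) : ℤ))
      - ∑ l ∈ Finset.range (m-1), (bit2 x l : ℤ) * (bit2 x (l+1) : ℤ)
      = (1 - 2 * (bit2 x k : ℤ)) * (bit2 x (k+1) : ℤ)
        + (if k = 0 then 0 else (bit2 x (k-1) : ℤ) * (1 - 2 * (bit2 x k : ℤ))) := by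
    rw [← Finset.sum_sub_distrib]
    have hsplit : ∀ l ∈ Finset.range (m-1),
        (bit2 y l : ℤ) * (bit2 y (l+1) : ℤ) - (bit2 x l : ℤ) * (bit2 x (l+1) : ℤ)
        = (((bit2 y l : ℤ) - bit2 x l) * (bit2 y (l+1) : ℤ))
          + ((bit2 x l : ℤ) * ((bit2 y (l+1) : ℤ) - bit2 x (l+1))) := by
      intro l _; ring
    rw [Finset.sum_congr rfl hsplit, Finset.sum_add_distrib]
    congr 1
    · rw [dj_sum_single (show k < m - 1 by omega)]
      · rw [hby k, if_pos rfl, hby (k+1), if_neg (by omega)]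
        ring
      · intro l hl
        rw [hby l, if_neg hl]
        ring
    · by_cases hk0 : k = 0
      · rw [if_pos hk0, Finset.sum_eq_zero]
        intro l _
        rw [hby (l+1), if_neg (by omega)]
        ring
      · rw [if_neg hk0, dj_sum_single (show k - 1 < m - 1 by omega)]
        · rw [hby (k-1+1), show k - 1 + 1 = k by omega, if_pos rfl]
          ring
        · intro l hl
          rw [hby (l+1), if_neg (by omega)]
          ring
  have hL : (∑ l ∈ Finset.range m, (β (l+1) : ℤ) * (bit2 y l : ℤ))
      - ∑ l ∈ Finset.range m, (β (l+1) : ℤ) * (bit2 x l : ℤ)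
      = (β (k+1) : ℤ) * (1 - 2 * (bit2 x k : ℤ)) := by
    rw [← Finset.sum_sub_distrib]
    rw [dj_sum_single (show k < m by omega)]
    · rw [hby k, if_pos rfl]; ring
    · intro l hl
      rw [hby l, if_neg hl]
      ring
  rw [hf y, hf x]
  push_cast
  linear_combination ((q : ℤ) / 2) * hQ + hL

/-- Davis–Jedwab/Golay: the quadratic Boolean function
`f = (q/2)·∑ x_l x_{l+1} + ∑ β_l x_l + β_0` (identity permutation) gives a Golay
complementary pair `(ξ^{f_i}, ξ^{f_i + (q/2) i_1})` of length `2^m`. -/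
theorem golay_pair_from_gbf
    (q m : ℕ) (hq : 0 < q) (hqe : 2 ∣ q) (hm : 1 ≤ m) (β : ℕ → ℕ)
    (f : ℕ → ℕ)
    (hf : ∀ i, f i =
      q / 2 * ∑ l ∈ Finset.range (m - 1), bit2 i l * bit2 i (l + 1) +
        ∑ l ∈ Finset.range m, β (l + 1) * bit2 i l + β 0)
    (c d : ℕ → ℂ)
    (hc : ∀ i, c i = Complex.exp (2 * Real.pi * Complex.I / q) ^ f i)
    (hd : ∀ i, d i = Complex.exp (2 * Real.pi * Complex.I / q) ^ (f i + q / 2 * bit2 i 0)) :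
    ∀ u, 0 < u → u < 2 ^ m → aacf (2 ^ m) c u + aacf (2 ^ m) d u = 0 := by
  intro u hu hum
  classical
  set ξ : ℂ := Complex.exp (2 * Real.pi * Complex.I / q) with hξdef
  have hξ0 : ξ ≠ 0 := Complex.exp_ne_zero _
  have hξh : ξ ^ (q / 2) = -1 := dj_xi_half hq hqe
  set q2 : ℤ := ((q / 2 : ℕ) : ℤ) with hq2def
  have hq2 : ξ ^ q2 = -1 := by rw [hq2def, zpow_natCast]; exact hξh
  have hnq2 : ξ ^ (-q2) = -1 := by
    rw [zpow_neg, hq2]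
    norm_num
  have hconj : ∀ n : ℕ, (starRingEnd ℂ) (ξ ^ n) = ξ ^ (-(n : ℤ)) := by
    intro n
    rw [map_pow, hξdef, dj_conj_xi, inv_pow, zpow_neg, zpow_natCast]
  set F : ℕ → ℤ := fun i => (f (i + u) : ℤ) - (f i : ℤ) with hFdef
  set E : ℕ → ℂ := fun i => ξ ^ F i with hEdef
  have hmul : ∀ a b : ℕ, ξ ^ a * ξ ^ (-(b : ℤ)) = ξ ^ ((a : ℤ) - (b : ℤ)) := by
    intro a b
    rw [← zpow_natCast ξ a, ← zpow_add₀ hξ0, ← sub_eq_add_neg]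
  have hterm : ∀ i, c (i + u) * (starRingEnd ℂ) (c i) + d (i + u) * (starRingEnd ℂ) (d i)
      = E i * (1 + (-1 : ℂ) ^ (bit2 (i + u) 0 + bit2 i 0)) := by
    intro i
    rw [hc (i + u), hc i, hd (i + u), hd i, hconj, hconj, hmul, hmul]
    have h1 : ξ ^ ((f (i + u) : ℤ) - (f i : ℤ)) = E i := by rw [hEdef]
    have hexp : ((f (i + u) + q / 2 * bit2 (i + u) 0 : ℕ) : ℤ)
        - ((f i + q / 2 * bit2 i 0 : ℕ) : ℤ)
        = F i + (q2 * (bit2 (i + u) 0 : ℤ) + (-q2) * (bit2 i 0 : ℤ)) := by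
      rw [hFdef, hq2def]
      push_cast
      ring
    rw [h1, hexp, zpow_add₀ hξ0, zpow_add₀ hξ0, zpow_mul, zpow_mul, hq2, hnq2,
      zpow_natCast, zpow_natCast]
    have h2 : ξ ^ F i = E i := by rw [hEdef]
    rw [h2, pow_add]
    ring
  -- pointwise existence of differing bit
  have hbne : ∀ i : ℕ, ∃ l, bit2 i l ≠ bit2 (i + u) l := by
    intro i
    by_contra hcon
    push_neg at hcon
    have := dj_eq_of_bit2_eq hcon
    omega
  set ν : ℕ → ℕ := fun i => Nat.find (hbne i) with hνdef
  have hνspec : ∀ i, bit2 i (ν i) ≠ bit2 (i + u) (ν i) := fun i => Nat.find_spec (hbne i)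
  have hνmin : ∀ i l, l < ν i → bit2 i l = bit2 (i + u) l := by
    intro i l hl
    have := Nat.find_min (hbne i) hl
    simpa using this
  set g : ℕ → ℕ := fun i => djflip i (ν i - 1) with hgdef
  set S : Finset ℕ :=
    (Finset.range (2 ^ m - u)).filter (fun i => bit2 i 0 = bit2 (i + u) 0) with hSdef
  have hmain : ∀ i ∈ S, (g i ∈ S) ∧ (E i + E (g i) = 0) ∧ g (g i) = i ∧ g i ≠ i := by
    intro i hi
    rw [hSdef, Finset.mem_filter, Finset.mem_range] at hi
    obtain ⟨hilt, hib⟩ := hi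
    set k : ℕ := ν i - 1 with hkdef
    have hν0 : ν i ≠ 0 := by
      intro h0
      apply hνspec i
      rw [h0]
      exact hib
    have hk1 : k + 1 = ν i := by omega
    have hiu2 : i + u < 2 ^ m := by omega
    have hi2 : i < 2 ^ m := by omega
    have hνm : ν i < m := by
      by_contra hcon
      push_neg at hcon
      exact hνspec i (by rw [dj_bit2_of_lt hi2 hcon, dj_bit2_of_lt hiu2 hcon])
    have hbk : bit2 i k = bit2 (i + u) k := hνmin i k (by omega)
    have hgi : g i = djflip i k := rfl
    have hgadd : g i + u = djflip (i + u) k := by rw [hgi]; exact dj_flip_add hbk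
    have hglt : g i + u < 2 ^ m := by rw [hgadd]; exact dj_flip_lt hiu2 (by omega)
    have hgb : ∀ l, bit2 (g i) l = if l = k then 1 - bit2 i k else bit2 i l := by
      intro l; rw [hgi, dj_bit2_flip]
    have hgbu : ∀ l, bit2 (g i + u) l
        = if l = k then 1 - bit2 (i + u) k else bit2 (i + u) l := by
      intro l; rw [hgadd, dj_bit2_flip]
    have hdiff : ∀ l, (bit2 (g i) l ≠ bit2 (g i + u) l) ↔ (bit2 i l ≠ bit2 (i + u) l) := by
      intro l
      rw [hgb l, hgbu l]
      by_cases hl : l = k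
      · rw [hl]
        simp only [if_true, eq_self_iff_true, ite_true]
        have h1 := dj_bit2_le i k
        have h2 := dj_bit2_le (i + u) k
        constructor <;> intro h <;> omega
      · simp [hl]
    have hνg : ν (g i) = ν i := by
      apply le_antisymm
      · exact Nat.find_min' (hbne (g i)) ((hdiff (ν i)).mpr (hνspec i))
      · exact Nat.find_min' (hbne i) ((hdiff (ν (g i))).mp (hνspec (g i)))
    have hgg : g (g i) = i := by
      show djflip (g i) (ν (g i) - 1) = i
      rw [hνg, ← hkdef, hgi]
      exact dj_flip_flip i k
    have hgne : g i ≠ i := by rw [hgi]; exact dj_flip_ne i k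
    have hgmem : g i ∈ S := by
      rw [hSdef, Finset.mem_filter, Finset.mem_range]
      constructor
      · omega
      · rw [hgb 0, hgbu 0]
        by_cases hk0 : (0 : ℕ) = k
        · rw [if_pos hk0, if_pos hk0, hbk]
        · rw [if_neg hk0, if_neg hk0]
          exact hib
    -- the exponent difference
    have hbkc : ((bit2 i k : ℕ) : ℤ) = ((bit2 (i + u) k : ℕ) : ℤ) := by exact_mod_cast hbk
    have e1 := dj_f_flip_diff q m β f hf (i + u) k (by omega)
    have e2 := dj_f_flip_diff q m β f hf i k (by omega)
    set ε : ℤ := (1 - 2 * (bit2 (i + u) k : ℤ))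
      * ((bit2 (i + u) (k + 1) : ℤ) - (bit2 i (k + 1) : ℤ)) with hεdef
    have hF : F (g i) = F i + q2 * ε := by
      have hFg : F (g i) = (f (djflip (i + u) k) : ℤ) - (f (djflip i k) : ℤ) := by
        rw [hFdef]
        simp only
        rw [hgadd, hgi]
      rw [hFg, hFdef, hq2def, hεdef]
      simp only
      rw [hbkc] at e2
      by_cases hk0 : k = 0
      · rw [if_pos hk0] at e1 e2
        linear_combination e1 - e2
      · rw [if_neg hk0] at e1 e2
        have hbm1 : ((bit2 i (k - 1) : ℕ) : ℤ) = ((bit2 (i + u) (k - 1) : ℕ) : ℤ) := by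
          exact_mod_cast hνmin i (k - 1) (by omega)
        rw [hbm1] at e2
        linear_combination e1 - e2
    have hεpm : ε = 1 ∨ ε = -1 := by
      have h1 := dj_bit2_le (i + u) k
      have h2 := dj_bit2_le (i + u) (k + 1)
      have h3 := dj_bit2_le i (k + 1)
      have hne : bit2 i (k + 1) ≠ bit2 (i + u) (k + 1) := by
        rw [hk1]; exact hνspec i
      have hδ : (1 - 2 * (bit2 (i + u) k : ℤ)) = 1 ∨ (1 - 2 * (bit2 (i + u) k : ℤ)) = -1 := by
        omega
      have hd2 : ((bit2 (i + u) (k + 1) : ℤ) - (bit2 i (k + 1) : ℤ)) = 1 ∨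
          ((bit2 (i + u) (k + 1) : ℤ) - (bit2 i (k + 1) : ℤ)) = -1 := by
        omega
      rcases hδ with h | h <;> rcases hd2 with h' | h' <;> rw [hεdef, h, h'] <;> norm_num
    have hEg : E (g i) = - E i := by
      rw [hEdef]
      simp only
      rw [hF, zpow_add₀ hξ0, zpow_mul]
      rcases hεpm with h | h <;> rw [h]
      · rw [zpow_one, hq2]; ring
      · rw [zpow_neg, zpow_one, hq2]
        norm_num
    exact ⟨hgmem, by rw [hEg]; ring, hgg, hgne⟩
  have hSsum : ∑ i ∈ S, E i = 0 :=
    Finset.sum_involution (fun i _ => g i)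
      (fun i hi => by
        have h := (hmain i hi).2.1
        simpa using h)
      (fun i hi _ => (hmain i hi).2.2.2)
      (fun i hi => (hmain i hi).1)
      (fun i hi => (hmain i hi).2.2.1)
  rw [aacf, aacf, ← Finset.sum_add_distrib]
  rw [Finset.sum_congr rfl (fun i _ => hterm i)]
  rw [← Finset.sum_filter_add_sum_filter_not (Finset.range (2 ^ m - u))
    (fun i => bit2 i 0 = bit2 (i + u) 0)]
  have hyes : ∑ i ∈ (Finset.range (2 ^ m - u)).filter (fun i => bit2 i 0 = bit2 (i + u) 0),
      E i * (1 + (-1 : ℂ) ^ (bit2 (i + u) 0 + bit2 i 0)) = 0 := by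
    have : ∀ i ∈ (Finset.range (2 ^ m - u)).filter (fun i => bit2 i 0 = bit2 (i + u) 0),
        E i * (1 + (-1 : ℂ) ^ (bit2 (i + u) 0 + bit2 i 0)) = 2 * E i := by
      intro i hi
      rw [Finset.mem_filter] at hi
      have hib := hi.2
      have hexp : bit2 (i + u) 0 + bit2 i 0 = 2 * bit2 i 0 := by omega
      rw [hexp, pow_mul]
      norm_num
      ring
    rw [Finset.sum_congr rfl this, ← Finset.mul_sum]
    rw [← hSdef] at *
    rw [hSsum]
    ring
  have hno : ∑ i ∈ (Finset.range (2 ^ m - u)).filter (fun i => ¬ (bit2 i 0 = bit2 (i + u) 0)),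
      E i * (1 + (-1 : ℂ) ^ (bit2 (i + u) 0 + bit2 i 0)) = 0 := by
    apply Finset.sum_eq_zero
    intro i hi
    rw [Finset.mem_filter] at hi
    have hib := hi.2
    have h1 := dj_bit2_le i 0
    have h2 := dj_bit2_le (i + u) 0
    have hexp : bit2 (i + u) 0 + bit2 i 0 = 1 := by omega
    rw [hexp, pow_one]
    ring
  rw [hyes, hno, add_zero]
end

section
/- Let m, k be positive integers with k ≤ m, let W_1,...,W_k be a partition of {1,...,m} into nonempty sets with bijections π_γ: {1,...,m_γ} → W_γ (m_γ = |W_γ|), and suppose {π_1(1),...,π_k(1)} = {1,...,k}. Let q be even, and f(x) = (q/2)·∑_{γ=1}^k ∑_{l=1}^{m_γ−1} x_{π_γ(l)} x_{π_γ(l+1)} + ∑_{l=1}^m β_l x_l + β_0. For λ ∈ {0,...,2^k−1} with binary digits (λ_1,...,λ_k), define f^λ_i = f(i_1,...,i_m) + (q/2)·∑_{γ=1}^k λ_γ i_{π_γ(1)}, and c^λ = (ξ^{f^λ_i})_{i=0}^{2^m−1} where ξ = e^{2πi/q}. Then ∑_{λ=0}^{2^k−1} ρ(c^λ; u) = 0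 for all u with 0 < u < 2^k. -/
lemma bit2_le_one (i l : ℕ) : bit2 i l ≤ 1 := by
  have := Nat.mod_lt (i / 2 ^ l) (show 0 < 2 by norm_num)
  unfold bit2; omega

lemma bit2_eq_ite (i l : ℕ) : bit2 i l = if i.testBit l then 1 else 0 := by
  rw [Nat.testBit_eq_decide_div_mod_eq]
  rcases Nat.mod_two_eq_zero_or_one (i / 2 ^ l) with h | h <;> simp [bit2, h]

lemma bit2_xor_pow (lam g l : ℕ) :
    bit2 (lam ^^^ 2 ^ g) l = if l = g then 1 - bit2 lam l else bit2 lam l := by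
  rw [bit2_eq_ite, bit2_eq_ite, Nat.testBit_xor, Nat.testBit_two_pow]
  by_cases h : l = g
  · subst h; cases hb : lam.testBit l <;> simp [hb]
  · have h' : g ≠ l := fun e => h e.symm
    cases hb : lam.testBit l <;> simp [h, h', hb]

/-- The `2^k` sequences obtained from the partition-based quadratic GBF
`f = (q/2)·∑_γ ∑_l x_{π_γ(l)} x_{π_γ(l+1)} + ∑ β_l x_l + β_0` by adding
`(q/2)·∑_γ λ_γ x_{π_γ(1)}` form a Golay complementary set: their aperiodic
autocorrelations sum to zero at every shift `0 < u < 2^k`.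
(Variables are indexed `0,…,m-1`; `π γ` lists the elements of the block `W_γ`.) -/
theorem gcs_from_partition_gbf
    (q m k : ℕ) (hq : 0 < q) (hqe : 2 ∣ q) (hk : 0 < k) (hkm : k ≤ m)
    (mγ : Fin k → ℕ) (hmγ : ∀ γ, 0 < mγ γ)
    (π : Fin k → ℕ → ℕ)
    (hπlt : ∀ γ, ∀ l < mγ γ, π γ l < m)
    (hπinj : ∀ γ, Set.InjOn (π γ) (Set.Iio (mγ γ)))
    (hπdisj : ∀ γ γ', γ ≠ γ' → ∀ l < mγ γ, ∀ l' < mγ γ', π γ l ≠ π γ' l')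
    (hπcover : ∀ x < m, ∃ γ, ∃ l < mγ γ, π γ l = x)
    (hfirst : ∀ γ, π γ 0 < k)
    (β : ℕ → ℕ)
    (f : ℕ → ℕ)
    (hf : ∀ i, f i =
      q / 2 * ∑ γ : Fin k, ∑ l ∈ Finset.range (mγ γ - 1),
          bit2 i (π γ l) * bit2 i (π γ (l + 1)) +
        ∑ l ∈ Finset.range m, β (l + 1) * bit2 i l + β 0)
    (c : ℕ → ℕ → ℂ)
    (hc : ∀ lam i, c lam i = Complex.exp (2 * Real.pi * Complex.I / q) ^
      (f i + q / 2 * ∑ γ : Fin k, bit2 lam (γ : ℕ) * bit2 i (π γ 0))) :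
    ∀ u, 0 < u → u < 2 ^ k →
      ∑ lam ∈ Finset.range (2 ^ k), aacf (2 ^ m) (c lam) u = 0 := by
  intro u hu0 hu
  set ξ : ℂ := Complex.exp (2 * Real.pi * Complex.I / q) with hξ
  have hξ0 : ξ ≠ 0 := Complex.exp_ne_zero _
  -- ξ^(q/2) = -1
  have hhalf : ξ ^ ((q / 2 : ℕ) : ℤ) = -1 := by
    rw [zpow_natCast, ← Complex.exp_nat_mul]
    obtain ⟨t, ht⟩ := hqe
    have ht0 : t ≠ 0 := by omega
    have h2 : q / 2 = t := by omega
    have harg : ((q / 2 : ℕ) : ℂ) * (2 * Real.pi * Complex.I / q) = Real.pi * Complex.I := by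
      rw [h2, ht]
      have htc : (t : ℂ) ≠ 0 := Nat.cast_ne_zero.mpr ht0
      push_cast
      field_simp
    rw [harg, Complex.exp_pi_mul_I]
  have hhalfneg : ξ ^ (-((q / 2 : ℕ) : ℤ)) = -1 := by
    rw [zpow_neg, hhalf]; norm_num
  -- conjugation
  have hconj : ∀ n : ℕ, (starRingEnd ℂ) (ξ ^ n) = ξ ^ (-(n : ℤ)) := by
    intro n
    rw [map_pow, zpow_neg, zpow_natCast, ← inv_pow]
    congr 1
    rw [hξ, ← Complex.exp_conj, ← Complex.exp_neg]
    congr 1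
    simp [map_div₀, Complex.conj_ofNat]
    ring
  -- exponent
  set E : ℕ → ℕ → ℕ := fun lam i =>
    f i + q / 2 * ∑ γ : Fin k, bit2 lam (γ : ℕ) * bit2 i (π γ 0) with hE
  -- surjectivity of γ ↦ π γ 0 onto Fin k
  have hsurj : ∀ b < k, ∃ γ : Fin k, π γ 0 = b := by
    intro b hb
    have hinj : Function.Injective (fun γ : Fin k => (⟨π γ 0, hfirst γ⟩ : Fin k)) := by
      intro γ γ' h
      by_contra hne
      exact hπdisj γ γ' hne 0 (hmγ γ) 0 (hmγ γ') (by simpa using congrArg Fin.val h)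
    obtain ⟨γ, hγ⟩ := (Finite.injective_iff_surjective.mp hinj) ⟨b, hb⟩
    exact ⟨γ, by simpa using congrArg Fin.val hγ⟩
  unfold aacf
  rw [Finset.sum_comm]
  apply Finset.sum_eq_zero
  intro i hi
  set j := i + u with hj
  -- find a low bit where i and j differ
  have hbex : ∃ b, b < k ∧ bit2 j b ≠ bit2 i b := by
    by_contra hcon
    push_neg at hcon
    have hmod : j % 2 ^ k = i % 2 ^ k := by
      apply Nat.eq_of_testBit_eq
      intro b
      rw [Nat.testBit_mod_two_pow, Nat.testBit_mod_two_pow]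
      by_cases hb : b < k
      · have hcb := hcon b hb
        rw [bit2_eq_ite, bit2_eq_ite] at hcb
        cases h1 : j.testBit b <;> cases h2 : i.testBit b <;>
          simp [h1, h2] at hcb ⊢
      · simp [hb]
    have h1 : i ≡ j [MOD 2 ^ k] := hmod.symm
    have hdvd : 2 ^ k ∣ u := by
      have := (Nat.modEq_iff_dvd' (Nat.le_add_right i u)).mp h1
      simpa [hj] using this
    have := Nat.le_of_dvd hu0 hdvd
    omega
  obtain ⟨b, hbk, hbne⟩ := hbex
  obtain ⟨γ, hγb⟩ := hsurj b hbk
  -- rewrite the terms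
  have hterm : ∀ lam, c lam j * (starRingEnd ℂ) (c lam i) =
      ξ ^ ((E lam j : ℤ) - (E lam i : ℤ)) := by
    intro lam
    rw [hc, hc, hconj, sub_eq_add_neg, zpow_add₀ hξ0, zpow_natCast]
  -- cancellation by involution lam ↦ lam ^^^ 2^γ
  apply Finset.sum_involution (fun lam _ => lam ^^^ 2 ^ (γ : ℕ))
  · -- main cancellation
    intro lam hlam
    rw [hterm, hterm]
    set lam' := lam ^^^ 2 ^ (γ : ℕ) with hlam'
    -- sum identity
    have hbitg : (bit2 lam' (γ : ℕ) : ℤ) = 1 - (bit2 lam (γ : ℕ) : ℤ) := by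
      have h1 := bit2_xor_pow lam (γ : ℕ) (γ : ℕ)
      have h2 := bit2_le_one lam (γ : ℕ)
      rw [if_pos rfl] at h1
      rw [hlam', h1]
      omega
    have hbitne : ∀ γ' : Fin k, γ' ≠ γ → bit2 lam' (γ' : ℕ) = bit2 lam (γ' : ℕ) := by
      intro γ' hne
      have h1 := bit2_xor_pow lam (γ : ℕ) (γ' : ℕ)
      rw [if_neg (by simpa [Fin.val_eq_val] using hne)] at h1
      exact h1
    have hsum : ∀ x : ℕ,
        (∑ γ' : Fin k, (bit2 lam' (γ' : ℕ) * bit2 x (π γ' 0) : ℤ)) =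
        (∑ γ' : Fin k, (bit2 lam (γ' : ℕ) * bit2 x (π γ' 0) : ℤ)) +
          (1 - 2 * (bit2 lam (γ : ℕ) : ℤ)) * bit2 x (π γ 0) := by
      intro x
      rw [← sub_eq_iff_eq_add', ← Finset.sum_sub_distrib]
      rw [show (∑ γ' : Fin k,
          ((bit2 lam' (γ' : ℕ) * bit2 x (π γ' 0) : ℤ) - bit2 lam (γ' : ℕ) * bit2 x (π γ' 0))) =
          (1 - 2 * (bit2 lam (γ : ℕ) : ℤ)) * bit2 x (π γ 0) from ?_]
      rw [Fintype.sum_eq_single γ]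
      · rw [hbitg]; ring
      · intro γ' hne
        rw [hbitne γ' hne]; ring
    -- exponent difference
    have hEdiff : ((E lam' j : ℤ) - (E lam' i : ℤ)) =
        ((E lam j : ℤ) - (E lam i : ℤ)) +
          ((q / 2 : ℕ) : ℤ) * ((1 - 2 * (bit2 lam (γ : ℕ) : ℤ)) *
            ((bit2 j b : ℤ) - (bit2 i b : ℤ))) := by
      have hEc : ∀ lam0 x, ((E lam0 x : ℤ)) =
          (f x : ℤ) + ((q / 2 : ℕ) : ℤ) *
            ∑ γ' : Fin k, (bit2 lam0 (γ' : ℕ) * bit2 x (π γ' 0) : ℤ) := by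
        intro lam0 x
        rw [hE]
        push_cast
        ring
      rw [hEc, hEc, hEc, hEc, hsum j, hsum i, hγb]
      ring
    -- the multiplier is ±1
    have hA := bit2_le_one lam (γ : ℕ)
    have hB := bit2_le_one j b
    have hC := bit2_le_one i b
    have hmul : ((1 - 2 * (bit2 lam (γ : ℕ) : ℤ)) * ((bit2 j b : ℤ) - (bit2 i b : ℤ))) = 1 ∨
        ((1 - 2 * (bit2 lam (γ : ℕ) : ℤ)) * ((bit2 j b : ℤ) - (bit2 i b : ℤ))) = -1 := by
      interval_cases h1 : bit2 lam (γ : ℕ) <;> interval_cases h2 : bit2 j b <;>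
        interval_cases h3 : bit2 i b <;> omega
    rw [hEdiff]
    rcases hmul with h | h <;> rw [h] <;>
      rw [zpow_add₀ hξ0] <;> [skip; skip] <;>
      simp only [mul_one, mul_neg_one, hhalf, hhalfneg] <;> ring_nf <;>
      first
        | (rw [hhalf]; ring)
        | (rw [hhalfneg]; ring)
  · -- no fixed points
    intro lam _ _ hfix
    have := congrArg (fun x => x.testBit (γ : ℕ)) hfix
    simp [Nat.testBit_xor, Nat.testBit_two_pow] at this
  · -- involution
    intro lam hlam
    simp [Nat.xor_assoc]
  · -- membership
    intro lam hlam
    simp only [Finset.mem_range] at hlam ⊢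
    exact Nat.xor_lt_two_pow hlam (Nat.pow_lt_pow_right (by norm_num) γ.isLt)
end

section
/- With the setup of Theorem 2 of the paper: let m, n, k, b, q satisfy k ≤ m, b | q, 2 ≤ b ≤ q, b^n ≤ 2^m, q even; let f be the GBF f = (q/2)·∑_{γ=1}^k ∑_{l=1}^{m_γ−1} x_{π_γ(l)} x_{π_γ(l+1)} + ∑ β_l x_l + β_0 with {π_1(1),...,π_k(1)} = {1,...,k}; for p ∈ {0,...,b^n−1} with base-b digits (p_1,...,p_n) let g^p_h = (q/b)·∑_{l=1}^n p_l h_l for h with base-b digits (h_1,...,h_n); and for λ ∈ {0,...,2^k−1} define the length-b^n sequence c^{p,λ}_h = ξ^{f(h_1,...,h_m) + g^p_h + (q/2)∑_γ λ_γ h_{π_γ(1)}} (where (h_1,...,h_m) is the binary representation of h, truncated to h < b^n, and ξ = e^{2πi/q}). Then the family {C^p : p = 0,...,b^n−1} with C^p = {c^{p,λ} : λ ∈ {0,...,2^k−1}} is a (b^n, 2^k, b^n, 2^k)-ZCS: ∑_λ ρ(c^{p,λ}, c^{t,λ}; u) = 0 whenever (0 < u < 2^k, p = t) or (0 ≤ u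 < 2^k, p ≠ t), and equals 2^k·b^n when u = 0, p = t. -/
/-- The `l`-th base-`b` digit (0-based) of `h`. -/
def digit (b h l : ℕ) : ℕ := h / b ^ l % b

lemma bit2_eq_digit : bit2 = digit 2 := rfl

lemma digit_lt (b h l : ℕ) (hb : 0 < b) : digit b h l < b := Nat.mod_lt _ hb

lemma digit_add_high_lo (b : ℕ) (hb : 0 < b) {n h j l : ℕ} (hl : l < n) :
    digit b (h + b ^ n * j) l = digit b h l := by
  unfold digit
  have h1 : b ^ n * j = b ^ l * (b ^ (n - l - 1) * (b * j)) := by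
    have hn : l + ((n - l - 1) + 1) = n := by omega
    calc b ^ n * j = b ^ (l + ((n - l - 1) + 1)) * j := by rw [hn]
      _ = _ := by ring
  rw [h1, Nat.add_mul_div_left _ _ (pow_pos hb l), mul_comm b j,
    ← mul_assoc, Nat.add_mul_mod_self_right]

lemma digit_add_high_hi (b : ℕ) {n h j : ℕ} (hh : h < b ^ n) (hj : j < b) :
    digit b (h + b ^ n * j) n = j := by
  unfold digit
  have hbpos : 0 < b ^ n := lt_of_le_of_lt (Nat.zero_le _) hh
  rw [Nat.add_mul_div_left _ _ hbpos, Nat.div_eq_of_lt hh, Nat.zero_add,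
    Nat.mod_eq_of_lt hj]

lemma mod_pow_eq_of_digits (b : ℕ) :
    ∀ n p t, (∀ l < n, digit b p l = digit b t l) → p % b ^ n = t % b ^ n := by
  intro n
  induction n with
  | zero => intro p t _; simp [Nat.mod_one]
  | succ n ih =>
    intro p t h
    have h1 : p % b ^ n = t % b ^ n := ih p t fun l hl => h l (by omega)
    rw [pow_succ, Nat.mod_mul, Nat.mod_mul, h1]
    have := h n (by omega)
    unfold digit at this
    rw [this]

lemma eq_of_digits (b n p t : ℕ) (hp : p < b ^ n) (ht : t < b ^ n)
    (h : ∀ l < n, digit b p l = digit b t l) : p = t := by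
  have := mod_pow_eq_of_digits b n p t h
  rwa [Nat.mod_eq_of_lt hp, Nat.mod_eq_of_lt ht] at this

lemma sum_prod_digit (b : ℕ) (hb : 0 < b) (x : ℕ → ℂ) :
    ∀ n, ∑ h ∈ Finset.range (b ^ n), ∏ l ∈ Finset.range n, x l ^ digit b h l
      = ∏ l ∈ Finset.range n, ∑ j ∈ Finset.range b, x l ^ j := by
  intro n
  induction n with
  | zero => simp
  | succ n ih =>
    have step : ∑ h ∈ Finset.range (b ^ (n + 1)), ∏ l ∈ Finset.range (n + 1), x l ^ digit b h l
        = ∑ a ∈ Finset.range (b ^ n) ×ˢ Finset.range b,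
            ∏ l ∈ Finset.range (n + 1), x l ^ digit b (a.1 + b ^ n * a.2) l := by
      symm
      refine Finset.sum_nbij' (fun a => a.1 + b ^ n * a.2)
        (fun h => (h % b ^ n, h / b ^ n)) ?_ ?_ ?_ ?_ ?_
      · intro a ha
        simp only [Finset.mem_range, Finset.mem_product] at *
        calc a.1 + b ^ n * a.2 < b ^ n * (a.2 + 1) := by nlinarith [ha.1]
          _ ≤ b ^ n * b := by nlinarith [ha.2]
          _ = b ^ (n+1) := (pow_succ b n).symm
      · intro a ha
        simp only [Finset.mem_range, Finset.mem_product] at *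
        have h1 : a % b ^ n < b ^ n := Nat.mod_lt _ (pow_pos hb n)
        have h2 : a / b ^ n < b := Nat.div_lt_of_lt_mul (by rwa [← pow_succ] )
        exact ⟨h1, h2⟩
      · intro a ha
        simp only [Finset.mem_range, Finset.mem_product] at ha
        have h1 : (a.1 + b ^ n * a.2) % b ^ n = a.1 := by
          rw [Nat.add_mul_mod_self_left, Nat.mod_eq_of_lt ha.1]
        have h2 : (a.1 + b ^ n * a.2) / b ^ n = a.2 := by
          rw [Nat.add_mul_div_left _ _ (pow_pos hb n), Nat.div_eq_of_lt ha.1, Nat.zero_add]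
        simp [h1, h2]
      · intro a _; exact Nat.mod_add_div a (b ^ n)
      · intro a _; rfl
    rw [step]
    rw [Finset.sum_product]
    have inner : ∀ h ∈ Finset.range (b ^ n), ∀ j ∈ Finset.range b,
        ∏ l ∈ Finset.range (n + 1), x l ^ digit b (h + b ^ n * j) l
        = (∏ l ∈ Finset.range n, x l ^ digit b h l) * x n ^ j := by
      intro h hh j hj
      simp only [Finset.mem_range] at hh hj
      rw [Finset.prod_range_succ, digit_add_high_hi b hh hj]
      congr 1
      exact Finset.prod_congr rfl fun l hl =>
        by rw [digit_add_high_lo b hb (Finset.mem_range.mp hl)]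
    calc ∑ h ∈ Finset.range (b ^ n), ∑ j ∈ Finset.range b,
          ∏ l ∈ Finset.range (n + 1), x l ^ digit b (h + b ^ n * j) l
        = ∑ h ∈ Finset.range (b ^ n), ∑ j ∈ Finset.range b,
          (∏ l ∈ Finset.range n, x l ^ digit b h l) * x n ^ j := by
          exact Finset.sum_congr rfl fun h hh => Finset.sum_congr rfl fun j hj => inner h hh j hj
      _ = (∑ h ∈ Finset.range (b ^ n), ∏ l ∈ Finset.range n, x l ^ digit b h l)
            * ∑ j ∈ Finset.range b, x n ^ j := by
          rw [Finset.sum_mul_sum]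
      _ = _ := by rw [ih, Finset.prod_range_succ]

lemma zpow_finset_sum (w : ℂ) (hw : w ≠ 0) (s : Finset ℕ) (e : ℕ → ℤ) :
    w ^ (∑ a ∈ s, e a) = ∏ a ∈ s, w ^ e a := by
  classical
  induction s using Finset.cons_induction with
  | empty => simp
  | cons a s ha ih => rw [Finset.sum_cons, Finset.prod_cons, zpow_add₀ hw, ih]

lemma neg_one_zpow_sub (a b : ℕ) : (-1 : ℂ) ^ ((a : ℤ) - b) = (-1 : ℂ) ^ (a + b) := by
  rw [zpow_sub₀ (by norm_num : (-1:ℂ) ≠ 0), zpow_natCast, zpow_natCast, pow_add]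
  rcases Nat.even_or_odd b with hb | hb
  · rw [hb.neg_one_pow]; simp
  · rw [hb.neg_one_pow]; rw [div_neg, div_one]; ring

lemma zeta_pow_half (q : ℕ) (hq : 0 < q) (hqe : 2 ∣ q) :
    Complex.exp (2 * Real.pi * Complex.I / q) ^ (q / 2) = -1 := by
  rw [← Complex.exp_nat_mul]
  have hcast : ((q / 2 : ℕ) : ℂ) = (q : ℂ) / 2 := by
    obtain ⟨c, rfl⟩ := hqe
    rw [Nat.mul_div_cancel_left c (by norm_num : 0 < 2)]
    push_cast; ring
  have hq0 : (q : ℂ) ≠ 0 := Nat.cast_ne_zero.mpr hq.ne'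
  have : ((q / 2 : ℕ) : ℂ) * (2 * Real.pi * Complex.I / q) = Real.pi * Complex.I := by
    rw [hcast]; field_simp
  rw [this, Complex.exp_pi_mul_I]

lemma zeta_pow_div (q b : ℕ) (hq : 0 < q) (hb : 0 < b) (hbdvd : b ∣ q) :
    Complex.exp (2 * Real.pi * Complex.I / q) ^ (q / b) =
      Complex.exp (2 * Real.pi * Complex.I / b) := by
  rw [← Complex.exp_nat_mul]
  congr 1
  have hq0 : (q : ℂ) ≠ 0 := Nat.cast_ne_zero.mpr hq.ne'
  have hb0 : (b : ℂ) ≠ 0 := Nat.cast_ne_zero.mpr hb.ne'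
  have hcast : ((q / b : ℕ) : ℂ) = (q : ℂ) / b := by
    obtain ⟨c, rfl⟩ := hbdvd
    rw [Nat.mul_div_cancel_left c hb]
    push_cast
    rw [mul_comm, mul_div_assoc, div_self hb0, mul_one]
  rw [hcast]; field_simp

lemma conj_zeta_pow (q e : ℕ) :
    (starRingEnd ℂ) (Complex.exp (2 * Real.pi * Complex.I / q) ^ e) =
      Complex.exp (2 * Real.pi * Complex.I / q) ^ (-(e : ℤ)) := by
  have h1 : (starRingEnd ℂ) (Complex.exp (2 * Real.pi * Complex.I / q)) =
      (Complex.exp (2 * Real.pi * Complex.I / q))⁻¹ := by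
    rw [← Complex.exp_conj, ← Complex.exp_neg]
    congr 1
    simp only [map_div₀, map_mul, Complex.conj_I, Complex.conj_ofReal, map_ofNat, map_natCast]
    ring
  rw [map_pow, h1, inv_pow, ← zpow_natCast, ← zpow_neg]

lemma zeta_mul_conj (q : ℕ) (hq : 0 < q) (a b : ℕ) :
    Complex.exp (2 * Real.pi * Complex.I / q) ^ a *
      (starRingEnd ℂ) (Complex.exp (2 * Real.pi * Complex.I / q) ^ b) =
    Complex.exp (2 * Real.pi * Complex.I / q) ^ ((a : ℤ) - b) := by
  rw [conj_zeta_pow, ← zpow_natCast, ← zpow_add₀ (Complex.exp_ne_zero _), sub_eq_add_neg]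

lemma term_eq (q : ℕ) (hq : 0 < q) (hqe : 2 ∣ q) (E1 E2 S1 S2 : ℕ) :
    Complex.exp (2 * Real.pi * Complex.I / q) ^ (E1 + q / 2 * S1) *
      (starRingEnd ℂ) (Complex.exp (2 * Real.pi * Complex.I / q) ^ (E2 + q / 2 * S2))
    = Complex.exp (2 * Real.pi * Complex.I / q) ^ ((E1 : ℤ) - E2) * (-1 : ℂ) ^ (S1 + S2) := by
  set ζ := Complex.exp (2 * Real.pi * Complex.I / q) with hζ
  have hζ0 : ζ ≠ 0 := Complex.exp_ne_zero _
  rw [zeta_mul_conj q hq]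
  have hsplit : ((E1 + q / 2 * S1 : ℕ) : ℤ) - ((E2 + q / 2 * S2 : ℕ) : ℤ)
      = ((E1 : ℤ) - E2) + ((q / 2 : ℕ) : ℤ) * ((S1 : ℤ) - S2) := by push_cast; ring
  rw [hsplit, zpow_add₀ hζ0, zpow_mul]
  congr 1
  have h1 : ζ ^ (((q / 2 : ℕ)) : ℤ) = -1 := by
    rw [zpow_natCast, hζ, zeta_pow_half q hq hqe]
  rw [h1, neg_one_zpow_sub]
/-- Theorem 2: the family `{C^p}` built from the partition-based quadratic GBF `f`,
the EGBFs `g^p = (q/b)∑ p_l y_l`, and the offsets `(q/2)∑ λ_γ x_{π_γ(1)}`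
(all sequences truncated to length `b^n`) forms a `(b^n, 2^k, b^n, 2^k)`-ZCS.
(Variables are indexed `0,…,m-1`; `π γ` lists the elements of the block `W_γ`.) -/
theorem zcs_from_egbf
    (q m n k b : ℕ) (hq : 0 < q) (hqe : 2 ∣ q)
    (hk : 0 < k) (hkm : k ≤ m)
    (hb2 : 2 ≤ b) (hbq : b ≤ q) (hbdvd : b ∣ q) (hbn : b ^ n ≤ 2 ^ m)
    (mγ : Fin k → ℕ) (hmγ : ∀ γ, 0 < mγ γ)
    (π : Fin k → ℕ → ℕ)
    (hπlt : ∀ γ, ∀ l < mγ γ, π γ l < m)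
    (hπinj : ∀ γ, Set.InjOn (π γ) (Set.Iio (mγ γ)))
    (hπdisj : ∀ γ γ', γ ≠ γ' → ∀ l < mγ γ, ∀ l' < mγ γ', π γ l ≠ π γ' l')
    (hπcover : ∀ x < m, ∃ γ, ∃ l < mγ γ, π γ l = x)
    (hfirst : ∀ γ, π γ 0 < k)
    (β : ℕ → ℕ)
    (f : ℕ → ℕ)
    (hf : ∀ i, f i =
      q / 2 * ∑ γ : Fin k, ∑ l ∈ Finset.range (mγ γ - 1),
          bit2 i (π γ l) * bit2 i (π γ (l + 1)) +
        ∑ l ∈ Finset.range m, β (l + 1) * bit2 i l + β 0)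
    (g : ℕ → ℕ → ℕ)
    (hg : ∀ p h, g p h = q / b * ∑ l ∈ Finset.range n, digit b p l * digit b h l)
    (c : ℕ → ℕ → ℕ → ℂ)
    (hc : ∀ p lam h, c p lam h = Complex.exp (2 * Real.pi * Complex.I / q) ^
      (f h + g p h + q / 2 * ∑ γ : Fin k, bit2 lam (γ : ℕ) * bit2 h (π γ 0))) :
    ∀ p < b ^ n, ∀ t < b ^ n, ∀ u < 2 ^ k,
      ∑ lam ∈ Finset.range (2 ^ k), zcorr (b ^ n) (c p lam) (c t lam) u =
        if u = 0 ∧ p = t then ((2 ^ k * b ^ n : ℕ) : ℂ) else 0 := by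

  intro p hp t ht u hu
  have hb0 : 0 < b := by omega
  have hq0 : (q : ℂ) ≠ 0 := Nat.cast_ne_zero.mpr hq.ne'
  set ζ : ℂ := Complex.exp (2 * Real.pi * Complex.I / q) with hζdef
  have hζ0 : ζ ≠ 0 := Complex.exp_ne_zero _
  -- the first-coordinate map
  set P : ℕ → ℕ := fun j => if h : j < k then π ⟨j, h⟩ 0 else 0 with hPdef
  have hPγ : ∀ γ : Fin k, P (γ : ℕ) = π γ 0 := by
    intro γ; simp only [hPdef, γ.isLt, dif_pos]
  have hPlt : ∀ j < k, P j < k := by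
    intro j hj; simp only [hPdef, hj, dif_pos]; exact hfirst _
  have hPinj : ∀ j < k, ∀ j' < k, P j = P j' → j = j' := by
    intro j hj j' hj' hEq
    by_contra hne
    refine hπdisj ⟨j, hj⟩ ⟨j', hj'⟩ (Fin.ne_of_val_ne hne) 0 (hmγ _) 0 (hmγ _) ?_
    rw [← hPγ ⟨j, hj⟩, ← hPγ ⟨j', hj'⟩]; exact hEq
  have hPsurj : ∀ j < k, ∃ γ < k, P γ = j := by
    intro j hj
    have himg : (Finset.range k).image P = Finset.range k := by
      apply Finset.eq_of_subset_of_card_le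
      · intro x hx
        simp only [Finset.mem_image, Finset.mem_range] at *
        obtain ⟨a, ha, rfl⟩ := hx
        exact hPlt a ha
      · have hinj : Set.InjOn P ↑(Finset.range k) := by
          intro a ha a' ha' hEq
          exact hPinj a (by simpa using ha) a' (by simpa using ha') hEq
        rw [Finset.card_image_of_injOn hinj]
    have hmem : j ∈ (Finset.range k).image P := by
      rw [himg]; exact Finset.mem_range.mpr hj
    obtain ⟨γ, hγ, hEq⟩ := Finset.mem_image.mp hmem
    exact ⟨γ, Finset.mem_range.mp hγ, hEq⟩
  simp only [zcorr]
  rw [Finset.sum_comm]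
  have key : ∀ i : ℕ,
      (∑ lam ∈ Finset.range (2 ^ k), c p lam (i + u) * (starRingEnd ℂ) (c t lam i))
      = ζ ^ (((f (i + u) + g p (i + u) : ℕ) : ℤ) - ((f i + g t i : ℕ) : ℤ)) *
        ∏ γ ∈ Finset.range k,
          (1 + (-1 : ℂ) ^ (bit2 (i + u) (P γ) + bit2 i (P γ))) := by
    intro i
    have hterm : ∀ lam : ℕ, c p lam (i + u) * (starRingEnd ℂ) (c t lam i)
        = ζ ^ (((f (i + u) + g p (i + u) : ℕ) : ℤ) - ((f i + g t i : ℕ) : ℤ)) *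
          ∏ γ ∈ Finset.range k,
            ((-1 : ℂ) ^ (bit2 (i + u) (P γ) + bit2 i (P γ))) ^ bit2 lam γ := by
      intro lam
      rw [hc p lam (i + u), hc t lam i, term_eq q hq hqe]
      congr 1
      have hsum : (∑ γ : Fin k, bit2 lam (γ : ℕ) * bit2 (i + u) (π γ 0)) +
          (∑ γ : Fin k, bit2 lam (γ : ℕ) * bit2 i (π γ 0))
          = ∑ γ : Fin k, bit2 lam (γ : ℕ) *
              (bit2 (i + u) (P (γ : ℕ)) + bit2 i (P (γ : ℕ))) := by
        rw [← Finset.sum_add_distrib]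
        exact Finset.sum_congr rfl fun γ _ => by rw [hPγ γ]; ring
      rw [hsum, ← Finset.prod_pow_eq_pow_sum,
        ← Fin.prod_univ_eq_prod_range
          (fun j => ((-1 : ℂ) ^ (bit2 (i + u) (P j) + bit2 i (P j))) ^ bit2 lam j) k]
      exact Finset.prod_congr rfl fun γ _ => pow_mul' _ _ _
    calc ∑ lam ∈ Finset.range (2 ^ k), c p lam (i + u) * (starRingEnd ℂ) (c t lam i)
        = ∑ lam ∈ Finset.range (2 ^ k),
            ζ ^ (((f (i + u) + g p (i + u) : ℕ) : ℤ) - ((f i + g t i : ℕ) : ℤ)) *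
            ∏ γ ∈ Finset.range k,
              ((-1 : ℂ) ^ (bit2 (i + u) (P γ) + bit2 i (P γ))) ^ bit2 lam γ :=
          Finset.sum_congr rfl fun lam _ => hterm lam
      _ = ζ ^ (((f (i + u) + g p (i + u) : ℕ) : ℤ) - ((f i + g t i : ℕ) : ℤ)) *
            ∑ lam ∈ Finset.range (2 ^ k), ∏ γ ∈ Finset.range k,
              ((-1 : ℂ) ^ (bit2 (i + u) (P γ) + bit2 i (P γ))) ^ bit2 lam γ :=
          (Finset.mul_sum _ _ _).symm
      _ = ζ ^ (((f (i + u) + g p (i + u) : ℕ) : ℤ) - ((f i + g t i : ℕ) : ℤ)) *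
            ∏ γ ∈ Finset.range k, ∑ j ∈ Finset.range 2,
              ((-1 : ℂ) ^ (bit2 (i + u) (P γ) + bit2 i (P γ))) ^ j := by
          simp only [bit2_eq_digit]
          rw [sum_prod_digit 2 (by norm_num)
            (fun γ => (-1 : ℂ) ^ (digit 2 (i + u) (P γ) + digit 2 i (P γ))) k]
      _ = _ := by
          congr 1
          exact Finset.prod_congr rfl fun γ _ => by
            rw [Finset.sum_range_succ, Finset.sum_range_one, pow_zero, pow_one]
  rw [Finset.sum_congr rfl fun i _ => key i]
  by_cases hu0 : u = 0
  · subst hu0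
    by_cases hpt : p = t
    · subst hpt
      rw [if_pos ⟨rfl, rfl⟩]
      have hterm1 : ∀ i ∈ Finset.range (b ^ n - 0),
          ζ ^ (((f (i + 0) + g p (i + 0) : ℕ) : ℤ) - ((f i + g p i : ℕ) : ℤ)) *
            ∏ γ ∈ Finset.range k,
              (1 + (-1 : ℂ) ^ (bit2 (i + 0) (P γ) + bit2 i (P γ))) = (2 : ℂ) ^ k := by
        intro i _
        rw [Nat.add_zero, sub_self, zpow_zero, one_mul]
        calc ∏ γ ∈ Finset.range k, (1 + (-1 : ℂ) ^ (bit2 i (P γ) + bit2 i (P γ)))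
            = ∏ _γ ∈ Finset.range k, (2 : ℂ) :=
              Finset.prod_congr rfl fun γ _ => by
                rw [Even.neg_one_pow ⟨_, rfl⟩]; norm_num
          _ = (2 : ℂ) ^ k := by rw [Finset.prod_const, Finset.card_range]
      rw [Finset.sum_congr rfl hterm1, Finset.sum_const, Finset.card_range, Nat.sub_zero]
      simp only [nsmul_eq_mul]
      push_cast
      ring
    · rw [if_neg (by tauto)]
      -- p ≠ t, u = 0
      set w : ℂ := Complex.exp (2 * Real.pi * Complex.I / b) with hwdef
      have hw0 : w ≠ 0 := Complex.exp_ne_zero _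
      have hwprim : IsPrimitiveRoot w b := Complex.isPrimitiveRoot_exp b (by omega)
      set y : ℕ → ℂ := fun l => w ^ ((digit b p l : ℤ) - digit b t l) with hydef
      have hterm2 : ∀ i : ℕ, ζ ^ (((g p i : ℕ) : ℤ) - ((g t i : ℕ) : ℤ))
          = ∏ l ∈ Finset.range n, (y l) ^ digit b i l := by
        intro i
        rw [hg p i, hg t i]
        have hsplit : ((q / b * ∑ l ∈ Finset.range n, digit b p l * digit b i l : ℕ) : ℤ) -
            ((q / b * ∑ l ∈ Finset.range n, digit b t l * digit b i l : ℕ) : ℤ)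
            = ((q / b : ℕ) : ℤ) * ∑ l ∈ Finset.range n,
                (((digit b p l : ℤ) - digit b t l) * digit b i l) := by
          have h1 : ∑ l ∈ Finset.range n, (((digit b p l : ℤ) - digit b t l) * digit b i l)
              = (∑ l ∈ Finset.range n, (digit b p l : ℤ) * digit b i l) -
                ∑ l ∈ Finset.range n, (digit b t l : ℤ) * digit b i l := by
            rw [← Finset.sum_sub_distrib]
            exact Finset.sum_congr rfl fun l _ => by ring
          rw [h1]; push_cast; ring
        rw [hsplit, zpow_mul, zpow_natCast, hζdef, zeta_pow_div q b hq hb0 hbdvd, ← hwdef,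
          zpow_finset_sum w hw0]
        exact Finset.prod_congr rfl fun l _ => by
          rw [zpow_mul, zpow_natCast]
      have hcancel : ∀ i : ℕ,
          ((f (i + 0) + g p (i + 0) : ℕ) : ℤ) - ((f i + g t i : ℕ) : ℤ)
          = ((g p i : ℕ) : ℤ) - ((g t i : ℕ) : ℤ) := by
        intro i; rw [Nat.add_zero]; push_cast; ring
      have hterm3 : ∀ i ∈ Finset.range (b ^ n - 0),
          ζ ^ (((f (i + 0) + g p (i + 0) : ℕ) : ℤ) - ((f i + g t i : ℕ) : ℤ)) *
            ∏ γ ∈ Finset.range k,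
              (1 + (-1 : ℂ) ^ (bit2 (i + 0) (P γ) + bit2 i (P γ)))
          = (∏ l ∈ Finset.range n, (y l) ^ digit b i l) * (2 : ℂ) ^ k := by
        intro i _
        rw [hcancel i, hterm2 i, Nat.add_zero]
        congr 1
        calc ∏ γ ∈ Finset.range k, (1 + (-1 : ℂ) ^ (bit2 i (P γ) + bit2 i (P γ)))
            = ∏ _γ ∈ Finset.range k, (2 : ℂ) :=
              Finset.prod_congr rfl fun γ _ => by
                rw [Even.neg_one_pow ⟨_, rfl⟩]; norm_num
          _ = (2 : ℂ) ^ k := by rw [Finset.prod_const, Finset.card_range]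
      rw [Finset.sum_congr rfl hterm3, ← Finset.sum_mul, Nat.sub_zero,
        sum_prod_digit b hb0 y n]
      obtain ⟨l0, hl0n, hl0ne⟩ : ∃ l < n, digit b p l ≠ digit b t l := by
        by_contra hcon
        push_neg at hcon
        exact hpt (eq_of_digits b n p t hp ht hcon)
      have hd0 : ((digit b p l0 : ℤ) - digit b t l0) ≠ 0 := by
        intro h
        exact hl0ne (by exact_mod_cast sub_eq_zero.mp h)
      have hnd : ¬ ((b : ℤ) ∣ ((digit b p l0 : ℤ) - digit b t l0)) := by
        intro hdvd
        refine hd0 (Int.eq_zero_of_abs_lt_dvd hdvd ?_)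
        have h1 := digit_lt b p l0 hb0
        have h2 := digit_lt b t l0 hb0
        rw [abs_lt]
        omega
      have hy1 : y l0 ≠ 1 := by
        intro h
        exact hnd ((hwprim.zpow_eq_one_iff_dvd _).mp h)
      have hyb : (y l0) ^ b = 1 := by
        rw [hydef]
        rw [← zpow_natCast (w ^ _), ← zpow_mul, mul_comm, zpow_mul, zpow_natCast,
          hwprim.pow_eq_one, one_zpow]
      have hzero : ∑ j ∈ Finset.range b, (y l0) ^ j = 0 := by
        rw [geom_sum_eq hy1 b, hyb, sub_self, zero_div]
      rw [Finset.prod_eq_zero (Finset.mem_range.mpr hl0n) hzero, zero_mul]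
  · rw [if_neg (by tauto)]
    apply Finset.sum_eq_zero
    intro i _
    have hex : ∃ γ < k, bit2 (i + u) (P γ) ≠ bit2 i (P γ) := by
      by_contra hcon
      push_neg at hcon
      have hall : ∀ l < k, digit 2 (i + u) l = digit 2 i l := by
        intro l hl
        obtain ⟨γ, hγ, rfl⟩ := hPsurj l hl
        exact hcon γ hγ
      have hmod := mod_pow_eq_of_digits 2 k (i + u) i hall
      have h1 : i + u ≡ i + 0 [MOD 2 ^ k] := by
        show (i + u) % 2 ^ k = (i + 0) % 2 ^ k
        rw [Nat.add_zero]; exact hmod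
      have h2 : u ≡ 0 [MOD 2 ^ k] := Nat.ModEq.add_left_cancel' i h1
      have hdvd : 2 ^ k ∣ u := (Nat.modEq_zero_iff_dvd).mp h2
      have := Nat.le_of_dvd (Nat.pos_of_ne_zero hu0) hdvd
      omega
    obtain ⟨γ0, hγ0, hbne⟩ := hex
    have ha : bit2 (i + u) (P γ0) < 2 := Nat.mod_lt _ (by norm_num)
    have hb' : bit2 i (P γ0) < 2 := Nat.mod_lt _ (by norm_num)
    have hsum1 : bit2 (i + u) (P γ0) + bit2 i (P γ0) = 1 := by omega
    have hfac : (1 : ℂ) + (-1 : ℂ) ^ (bit2 (i + u) (P γ0) + bit2 i (P γ0)) = 0 := by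
      rw [hsum1, pow_one]; ring
    rw [Finset.prod_eq_zero (Finset.mem_range.mpr hγ0) hfac, mul_zero]
end
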